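/- arXiv:1712.03561 — 7 statements merged into one kernel-verified Lean document; each statement's English description precedes it below -/
import Mathlib

section
/- Let G = 2 and suppose the design matrix X ∈ ℝ^{n×p} satisfies (1/n)XᵀX = I_p (i.e., X/√n is orthogonal). For j = 1,…,p let r_j = (1/n)⟨y, x^j⟩, where x^j is the j-th column of X. Let α ∈ [0,1] and λ_s, λ_d ≥ 0, and let (β̂¹, β̂²) be any global minimizer of the SplitReg objective. If |r_j| ≤ α λ_s, then β̂¹_j = 0 and β̂²_j = 0. -/
/-! Zeroing the `j`-th coefficient of one group changes the objective by
`t r_j - t²/2 - λ_s((1-α)/2 t² + α|t|) - λ_d |t| |β^h_j|`, where `t` is the old coefficient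
and `h` the other group: under an orthonormal column `x^j` the least-squares term changes by
exactly `t r_j - t²/2`. Since `t r_j ≤ |t| α λ_s`, this change is at most `-t²/2`, so minimality
forces `t = 0`. -/

open Finset

/-- The soft-thresholding operator: `soft z γ = sign(z) * max 0 (|z| - γ)`. -/
noncomputable def soft (z γ : ℝ) : ℝ := Real.sign z * max 0 (|z| - γ)

/-- The SplitReg objective function for data `y`, design matrix `X`,
elastic net mixing parameter `α`, sparsity penalty `lam_s`, diversity penalty `lam_d`,
and coefficient matrix `β` (one column `β g` per group). -/
noncomputable def splitRegObj {n p G : ℕ} (y : Fin n → ℝ) (X : Matrix (Fin n) (Fin p) ℝ)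
    (α lam_s lam_d : ℝ) (β : Fin G → Fin p → ℝ) : ℝ :=
  ∑ g : Fin G,
    ((1 / (2 * (n : ℝ))) * ∑ i, (y i - ∑ j, X i j * β g j) ^ 2
      + lam_s * ((1 - α) / 2 * ∑ j, (β g j) ^ 2 + α * ∑ j, |β g j|)
      + lam_d / 2 * ∑ h ∈ Finset.univ.erase g, ∑ j, |β g j| * |β h j|)

theorem Finset.sum_apply_update_zero {ι α M : Type*} [Fintype ι] [DecidableEq ι] [Zero α]
    [AddCommGroup M] (f : ι → α → M) (hf : ∀ k, f k 0 = 0) (v : ι → α) (j : ι) :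
    ∑ k, f k (Function.update v j 0 k) = ∑ k, f k (v k) - f j (v j) := by
  rw [eq_sub_iff_add_eq, ← Finset.add_sum_erase _ _ (Finset.mem_univ j),
    ← Finset.add_sum_erase _ _ (Finset.mem_univ j)]
  simp only [Function.update_self, hf, zero_add]
  rw [add_comm]
  congr 1
  refine Finset.sum_congr rfl fun k hk => ?_
  rw [Function.update_of_ne (Finset.ne_of_mem_erase hk)]

noncomputable def elasticNetObj {n p : ℕ} (y : Fin n → ℝ) (X : Matrix (Fin n) (Fin p) ℝ)
    (α lam_s : ℝ) (b : Fin p → ℝ) : ℝ :=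
  (1 / (2 * (n : ℝ))) * ∑ i, (y i - ∑ k, X i k * b k) ^ 2
    + lam_s * ((1 - α) / 2 * ∑ k, b k ^ 2 + α * ∑ k, |b k|)

theorem splitRegObj_two {n p : ℕ} (y : Fin n → ℝ) (X : Matrix (Fin n) (Fin p) ℝ)
    (α lam_s lam_d : ℝ) (β : Fin 2 → Fin p → ℝ) :
    splitRegObj y X α lam_s lam_d β
      = elasticNetObj y X α lam_s (β 0) + elasticNetObj y X α lam_s (β 1)
        + lam_d * ∑ k, |β 0 k| * |β 1 k| := by
  have herase0 : (Finset.univ : Finset (Fin 2)).erase 0 = {1} := by decide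
  have herase1 : (Finset.univ : Finset (Fin 2)).erase 1 = {0} := by decide
  simp only [splitRegObj, elasticNetObj, Fin.sum_univ_two, herase0, herase1,
    Finset.sum_singleton]
  rw [Finset.sum_congr rfl fun k _ => mul_comm |β 1 k| |β 0 k|]
  ring

section OrthonormalColumn

variable {n p : ℕ} (y : Fin n → ℝ) (X : Matrix (Fin n) (Fin p) ℝ) (j : Fin p)

theorem halfMSE_update_zero (u : Fin p → ℝ)
    (hcol : ∀ k, (1 / (n : ℝ)) * ∑ i, X i k * X i j = if k = j then 1 else 0) :
    (1 / (2 * (n : ℝ))) * ∑ i, (y i - ∑ k, X i k * Function.update u j 0 k) ^ 2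
      = (1 / (2 * (n : ℝ))) * ∑ i, (y i - ∑ k, X i k * u k) ^ 2
        + u j * ((1 / (n : ℝ)) * ∑ i, y i * X i j) - u j ^ 2 / 2 := by
  have hfit : ∀ i, ∑ k, X i k * Function.update u j 0 k = ∑ k, X i k * u k - X i j * u j :=
    fun i => Finset.sum_apply_update_zero (fun k x => X i k * x) (fun k => mul_zero _) u j
  have hcross : (1 / (n : ℝ)) * ∑ i, (∑ k, X i k * u k) * X i j = u j := by
    calc (1 / (n : ℝ)) * ∑ i, (∑ k, X i k * u k) * X i j
        = ∑ k, u k * ((1 / (n : ℝ)) * ∑ i, X i k * X i j) := by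
          simp only [Finset.sum_mul, Finset.mul_sum]
          rw [Finset.sum_comm]
          exact Finset.sum_congr rfl fun _ _ => Finset.sum_congr rfl fun _ _ => by ring
      _ = u j := by
          simp only [hcol, mul_ite, mul_one, mul_zero, Finset.sum_ite_eq', Finset.mem_univ,
            if_true]
  have hnorm : (1 / (n : ℝ)) * ∑ i, X i j ^ 2 = 1 := by simpa [sq] using hcol j
  have hexpand : ∑ i, (y i - ∑ k, X i k * Function.update u j 0 k) ^ 2
      = ∑ i, (y i - ∑ k, X i k * u k) ^ 2 + 2 * u j * ∑ i, y i * X i j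
        - 2 * u j * ∑ i, (∑ k, X i k * u k) * X i j + u j ^ 2 * ∑ i, X i j ^ 2 := by
    simp only [hfit, Finset.mul_sum, ← Finset.sum_add_distrib, ← Finset.sum_sub_distrib]
    exact Finset.sum_congr rfl fun _ _ => by ring
  rw [hexpand]
  linear_combination (-u j) * hcross + u j ^ 2 / 2 * hnorm

theorem elasticNetObj_update_zero (α lam_s : ℝ) (u : Fin p → ℝ)
    (hcol : ∀ k, (1 / (n : ℝ)) * ∑ i, X i k * X i j = if k = j then 1 else 0) :
    elasticNetObj y X α lam_s (Function.update u j 0)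
      = elasticNetObj y X α lam_s u + u j * ((1 / (n : ℝ)) * ∑ i, y i * X i j) - u j ^ 2 / 2
        - lam_s * ((1 - α) / 2 * u j ^ 2 + α * |u j|) := by
  have hsq := Finset.sum_apply_update_zero (fun _ x => x ^ 2)
    (fun _ => zero_pow two_ne_zero) u j
  have habs := Finset.sum_apply_update_zero (fun _ x => |x|) (fun _ => abs_zero) u j
  rw [elasticNetObj, elasticNetObj, halfMSE_update_zero y X j u hcol, hsq, habs]
  ring

theorem coord_eq_zero_of_minimizes_coupled_elasticNetObj {α lam_s lam_d : ℝ} (hα : α ≤ 1)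
    (hs : 0 ≤ lam_s) (hd : 0 ≤ lam_d)
    (hcol : ∀ k, (1 / (n : ℝ)) * ∑ i, X i k * X i j = if k = j then 1 else 0)
    (hr : |(1 / (n : ℝ)) * ∑ i, y i * X i j| ≤ α * lam_s) (u w : Fin p → ℝ)
    (hmin : ∀ b, elasticNetObj y X α lam_s u + lam_d * ∑ k, |u k| * |w k|
      ≤ elasticNetObj y X α lam_s b + lam_d * ∑ k, |b k| * |w k|) :
    u j = 0 := by
  have hcoupling := Finset.sum_apply_update_zero (fun k x => |x| * |w k|)
    (fun k => by simp) u j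
  have hle := hmin (Function.update u j 0)
  rw [elasticNetObj_update_zero y X j α lam_s u hcol, hcoupling] at hle
  set t := u j
  set r := (1 / (n : ℝ)) * ∑ i, y i * X i j
  have hcorr : t * r ≤ |t| * (α * lam_s) :=
    (le_abs_self _).trans ((abs_mul t r).trans_le (mul_le_mul_of_nonneg_left hr (abs_nonneg t)))
  have hridge : 0 ≤ lam_s * ((1 - α) / 2 * t ^ 2) := by
    have : 0 ≤ 1 - α := by linarith
    positivity
  have hdiv : 0 ≤ lam_d * (|t| * |w j|) := by positivity
  have ht : t ^ 2 ≤ 0 := by nlinarith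
  exact pow_eq_zero_iff two_ne_zero |>.mp (le_antisymm ht (sq_nonneg t))

end OrthonormalColumn

theorem splitreg_orthogonal_zero_general
    {n p : ℕ} (y : Fin n → ℝ) (X : Matrix (Fin n) (Fin p) ℝ)
    (α lam_s lam_d : ℝ) (hα : α ∈ Set.Icc (0 : ℝ) 1) (hs : 0 ≤ lam_s) (hd : 0 ≤ lam_d)
    (horth : ∀ j k : Fin p, (1 / (n : ℝ)) * ∑ i, X i j * X i k = if j = k then 1 else 0)
    (βhat : Fin 2 → Fin p → ℝ)
    (hmin : ∀ b : Fin 2 → Fin p → ℝ,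
      splitRegObj y X α lam_s lam_d βhat ≤ splitRegObj y X α lam_s lam_d b)
    (j : Fin p)
    (hr : |(1 / (n : ℝ)) * ∑ i, y i * X i j| ≤ α * lam_s) :
    βhat 0 j = 0 ∧ βhat 1 j = 0 := by
  have hcol : ∀ k, (1 / (n : ℝ)) * ∑ i, X i k * X i j = if k = j then 1 else 0 :=
    fun k => horth k j
  have key := coord_eq_zero_of_minimizes_coupled_elasticNetObj y X j hα.2 hs hd hcol hr
  refine ⟨key (βhat 0) (βhat 1) fun b => ?_, key (βhat 1) (βhat 0) fun b => ?_⟩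
  · have h := hmin ![b, βhat 1]
    simp only [splitRegObj_two, Matrix.cons_val_zero, Matrix.cons_val_one] at h
    linarith
  · have h := hmin ![βhat 0, b]
    simp only [splitRegObj_two, Matrix.cons_val_zero, Matrix.cons_val_one] at h
    rw [Finset.sum_congr rfl fun k _ => mul_comm |b k| |βhat 0 k|,
      Finset.sum_congr rfl fun k _ => mul_comm |βhat 1 k| |βhat 0 k|]
    linarith

/-- **Proposition 1, part 1 (orthogonal design, `G = 2`).**
If `(1/n)XᵀX = I` and `|r_j| ≤ α λ_s`, where `r_j = (1/n)⟨y, x^j⟩`, then the `j`-th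
coefficient of both models of any global minimizer of the SplitReg objective is zero. -/
theorem splitreg_orthogonal_zero
    {n p : ℕ} (hn : 0 < n) (y : Fin n → ℝ) (X : Matrix (Fin n) (Fin p) ℝ)
    (α lam_s lam_d : ℝ) (hα : α ∈ Set.Icc (0 : ℝ) 1) (hs : 0 ≤ lam_s) (hd : 0 ≤ lam_d)
    (horth : ∀ j k : Fin p, (1 / (n : ℝ)) * ∑ i, X i j * X i k = if j = k then 1 else 0)
    (βhat : Fin 2 → Fin p → ℝ)
    (hmin : ∀ b : Fin 2 → Fin p → ℝ,
      splitRegObj y X α lam_s lam_d βhat ≤ splitRegObj y X α lam_s lam_d b)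
    (j : Fin p)
    (hr : |(1 / (n : ℝ)) * ∑ i, y i * X i j| ≤ α * lam_s) :
    βhat 0 j = 0 ∧ βhat 1 j = 0 :=
  splitreg_orthogonal_zero_general y X α lam_s lam_d hα hs hd horth βhat hmin j hr
end

section
/- Let G = 2, suppose (1/n)XᵀX = I_p, and let r_j = (1/n)⟨y, x^j⟩. Let α ∈ [0,1], λ_s, λ_d ≥ 0, and let (β̂¹, β̂²) be any global minimizer of the SplitReg objective. If |r_j| > α λ_s and λ_d < 1 + (1−α)λ_s, then β̂¹_j = β̂²_j = soft(r_j, α λ_s)/(1 + (1−α)λ_s + λ_d). -/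
/-!
Since `(1/n) XᵀX = I`, the least-squares term of each model is
`‖y‖²/(2n) - ∑ₖ rₖ βₖ + ‖β‖²/2`, so for `G = 2` the objective is a constant plus a sum over the
coordinates `k` of a function of the pair `(β¹ₖ, β²ₖ)` alone; a global minimizer therefore minimizes
the pair function of coordinate `j`. For `r_j > αλ_s` and `m = (r_j - αλ_s)/(c + λ_d)`,
`c = 1 + (1-α)λ_s`, that function exceeds its value at `(m, m)` by at least
`(c - λ_d)/2 · ((x-m)² + (z-m)²)` at any `(x, z)`, so `(m, m)` is its only minimizer when `λ_d < c`.
Negative `r_j` reduces to this case by the symmetry `(r, a, b) ↦ (-r, -a, -b)`.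
-/

open Finset

lemma soft_neg (z γ : ℝ) : soft (-z) γ = -soft z γ := by
  simp only [soft, Real.sign_neg, abs_neg, neg_mul]

lemma soft_of_lt {z γ : ℝ} (hγ : 0 ≤ γ) (h : γ < z) : soft z γ = z - γ := by
  rw [soft, Real.sign_of_pos (by linarith), abs_of_pos (by linarith), max_eq_right (by linarith),
    one_mul]

lemma rss_eq_of_orthonormal {n p : ℕ} (y : Fin n → ℝ) (X : Matrix (Fin n) (Fin p) ℝ)
    (horth : ∀ j k : Fin p, (1 / (n : ℝ)) * ∑ i, X i j * X i k = if j = k then 1 else 0)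
    (c : Fin p → ℝ) :
    (1 / (2 * (n : ℝ))) * ∑ i, (y i - ∑ k, X i k * c k) ^ 2
      = (1 / (2 * (n : ℝ))) * ∑ i, y i ^ 2
        - ∑ k, ((1 / (n : ℝ)) * ∑ i, y i * X i k) * c k + (∑ k, c k ^ 2) / 2 := by
  have hcross : (1 / (n : ℝ)) * ∑ i, y i * ∑ k, X i k * c k
      = ∑ k, ((1 / (n : ℝ)) * ∑ i, y i * X i k) * c k := by
    simp only [Finset.mul_sum, Finset.sum_mul]
    rw [Finset.sum_comm]
    exact Finset.sum_congr rfl fun _ _ => Finset.sum_congr rfl fun _ _ => by ring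
  have hquad : (1 / (n : ℝ)) * ∑ i, (∑ k, X i k * c k) ^ 2 = ∑ k, c k ^ 2 := by
    calc (1 / (n : ℝ)) * ∑ i, (∑ k, X i k * c k) ^ 2
        = (1 / (n : ℝ)) * ∑ i, ∑ k, ∑ l, X i k * c k * (X i l * c l) := by
          simp only [sq, Finset.sum_mul_sum]
      _ = ∑ k, ∑ l, c k * c l * ((1 / (n : ℝ)) * ∑ i, X i k * X i l) := by
          simp only [Finset.mul_sum]
          rw [Finset.sum_comm]
          refine Finset.sum_congr rfl fun _ _ => ?_
          rw [Finset.sum_comm]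
          exact Finset.sum_congr rfl fun _ _ => Finset.sum_congr rfl fun _ _ => by ring
      _ = ∑ k, c k ^ 2 := by
          simp only [horth, mul_ite, mul_one, mul_zero, Finset.sum_ite_eq, Finset.mem_univ,
            if_true, sq]
  have hsplit : ∑ i, (y i - ∑ k, X i k * c k) ^ 2
      = ∑ i, y i ^ 2 - 2 * ∑ i, y i * ∑ k, X i k * c k + ∑ i, (∑ k, X i k * c k) ^ 2 := by
    rw [Finset.mul_sum, ← Finset.sum_sub_distrib, ← Finset.sum_add_distrib]
    exact Finset.sum_congr rfl fun _ _ => by ring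
  have hhalf : (1 / (2 * (n : ℝ))) = 1 / 2 * (1 / (n : ℝ)) := by ring
  rw [hsplit, ← hcross, ← hquad, hhalf]
  ring

/-- The terms of the SplitReg objective (`G = 2`, orthonormal design) that involve the `j`-th
coordinates `a = β¹_j`, `b = β²_j`, with `c = 1 + (1-α)λ_s`, `t = αλ_s` and `r = r_j`. -/
noncomputable def splitRegPairObj (c lam_d t r a b : ℝ) : ℝ :=
  c * a ^ 2 / 2 + c * b ^ 2 / 2 - r * (a + b) + t * (|a| + |b|) + lam_d * (|a| * |b|)

lemma splitRegObj_eq_sum_splitRegPairObj {n p : ℕ} (y : Fin n → ℝ)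
    (X : Matrix (Fin n) (Fin p) ℝ) (α lam_s lam_d : ℝ)
    (horth : ∀ j k : Fin p, (1 / (n : ℝ)) * ∑ i, X i j * X i k = if j = k then 1 else 0)
    (β : Fin 2 → Fin p → ℝ) :
    splitRegObj y X α lam_s lam_d β
      = (1 / (n : ℝ)) * ∑ i, y i ^ 2
        + ∑ k, splitRegPairObj (1 + (1 - α) * lam_s) lam_d (α * lam_s)
            ((1 / (n : ℝ)) * ∑ i, y i * X i k) (β 0 k) (β 1 k) := by
  have herase0 : (univ : Finset (Fin 2)).erase 0 = {1} := by decide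
  have herase1 : (univ : Finset (Fin 2)).erase 1 = {0} := by decide
  have hpair : ∑ k, splitRegPairObj (1 + (1 - α) * lam_s) lam_d (α * lam_s)
        ((1 / (n : ℝ)) * ∑ i, y i * X i k) (β 0 k) (β 1 k)
      = (1 + (1 - α) * lam_s) * (∑ k, β 0 k ^ 2) / 2
        + (1 + (1 - α) * lam_s) * (∑ k, β 1 k ^ 2) / 2
        - ∑ k, ((1 / (n : ℝ)) * ∑ i, y i * X i k) * β 0 k
        - ∑ k, ((1 / (n : ℝ)) * ∑ i, y i * X i k) * β 1 k
        + α * lam_s * (∑ k, |β 0 k| + ∑ k, |β 1 k|) + lam_d * ∑ k, |β 0 k| * |β 1 k| := by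
    simp only [Finset.mul_sum, Finset.sum_div, ← Finset.sum_add_distrib, ← Finset.sum_sub_distrib]
    exact Finset.sum_congr rfl fun k _ => by rw [splitRegPairObj]; ring
  have hsymm : ∑ k, |β 1 k| * |β 0 k| = ∑ k, |β 0 k| * |β 1 k| :=
    Finset.sum_congr rfl fun k _ => mul_comm _ _
  simp only [splitRegObj, Fin.sum_univ_two, herase0, herase1, Finset.sum_singleton,
    rss_eq_of_orthonormal y X horth]
  linear_combination -hpair + lam_d / 2 * hsymm

lemma le_apply_of_forall_sum_le {ι α M : Type*} [Fintype ι] [DecidableEq ι] [AddCommMonoid M]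
    [PartialOrder M] [IsOrderedCancelAddMonoid M] {f : ι → α → M} {x : ι → α}
    (hx : ∀ x' : ι → α, ∑ k, f k (x k) ≤ ∑ k, f k (x' k)) (j : ι) (a : α) :
    f j (x j) ≤ f j a := by
  have hrest :
      ∑ k ∈ univ.erase j, f k (Function.update x j a k) = ∑ k ∈ univ.erase j, f k (x k) :=
    Finset.sum_congr rfl fun k hk => by rw [Function.update_of_ne (Finset.ne_of_mem_erase hk)]
  have h := hx (Function.update x j a)
  rwa [← Finset.add_sum_erase _ _ (mem_univ j), ← Finset.add_sum_erase _ _ (mem_univ j), hrest,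
    Function.update_self, add_le_add_iff_right] at h

lemma splitRegPairObj_neg (c lam_d t r a b : ℝ) :
    splitRegPairObj c lam_d t (-r) (-a) (-b) = splitRegPairObj c lam_d t r a b := by
  simp only [splitRegPairObj, abs_neg]
  ring

lemma splitRegPairObj_quadratic_growth {c lam_d t m : ℝ} (hld : 0 ≤ lam_d) (ht : 0 ≤ t)
    (hm : 0 ≤ m) (x z : ℝ) :
    splitRegPairObj c lam_d t ((c + lam_d) * m + t) m m
        + (c - lam_d) / 2 * ((x - m) ^ 2 + (z - m) ^ 2)
      ≤ splitRegPairObj c lam_d t ((c + lam_d) * m + t) x z := by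
  have hdefect : splitRegPairObj c lam_d t ((c + lam_d) * m + t) x z
      - splitRegPairObj c lam_d t ((c + lam_d) * m + t) m m
      - (c - lam_d) / 2 * ((x - m) ^ 2 + (z - m) ^ 2)
      = lam_d / 2 * (|x| + |z| - 2 * m) ^ 2 + (2 * lam_d * m + t) * (|x| + |z| - (x + z)) := by
    simp only [splitRegPairObj, abs_of_nonneg hm]
    linear_combination (-lam_d / 2) * (sq_abs x + sq_abs z)
  have hx := le_abs_self x
  have hz := le_abs_self z
  have : 0 ≤ lam_d / 2 * (|x| + |z| - 2 * m) ^ 2 := by positivity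
  have : 0 ≤ (2 * lam_d * m + t) * (|x| + |z| - (x + z)) :=
    mul_nonneg (by positivity) (by linarith)
  linarith

lemma eq_div_of_forall_splitRegPairObj_le {c lam_d t r a b : ℝ} (hld : 0 ≤ lam_d)
    (hdc : lam_d < c) (ht : 0 ≤ t) (hr : t < r)
    (hmin : ∀ x z, splitRegPairObj c lam_d t r a b ≤ splitRegPairObj c lam_d t r x z) :
    a = (r - t) / (c + lam_d) ∧ b = (r - t) / (c + lam_d) := by
  set m := (r - t) / (c + lam_d)
  have hm : 0 ≤ m := div_nonneg (by linarith) (by linarith)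
  have hr_eq : r = (c + lam_d) * m + t := by
    rw [mul_div_cancel₀ _ (by linarith : c + lam_d ≠ 0)]
    ring
  rw [hr_eq] at hmin
  have hgrowth := splitRegPairObj_quadratic_growth (c := c) hld ht hm a b
  have hsq : (a - m) ^ 2 + (b - m) ^ 2 ≤ 0 :=
    nonpos_of_mul_nonpos_right (by linarith [hmin m m]) (by linarith : 0 < (c - lam_d) / 2)
  constructor
  · nlinarith [sq_nonneg (a - m), sq_nonneg (b - m)]
  · nlinarith [sq_nonneg (a - m), sq_nonneg (b - m)]

lemma eq_soft_div_of_forall_splitRegPairObj_le {c lam_d t r a b : ℝ} (hld : 0 ≤ lam_d)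
    (hdc : lam_d < c) (ht : 0 ≤ t) (hr : t < |r|)
    (hmin : ∀ x z, splitRegPairObj c lam_d t r a b ≤ splitRegPairObj c lam_d t r x z) :
    a = soft r t / (c + lam_d) ∧ b = soft r t / (c + lam_d) := by
  rcases lt_or_ge r 0 with hneg | hnonneg
  · have hmin' : ∀ x z, splitRegPairObj c lam_d t (-r) (-a) (-b)
        ≤ splitRegPairObj c lam_d t (-r) x z := fun x z => by
      have hflip := splitRegPairObj_neg c lam_d t r (-x) (-z)
      rw [neg_neg, neg_neg] at hflip
      rw [splitRegPairObj_neg, hflip]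
      exact hmin (-x) (-z)
    have hsoft : soft r t = -(-r - t) := by
      rw [← neg_neg r, soft_neg, soft_of_lt ht (by rwa [abs_of_neg hneg] at hr), neg_neg]
    obtain ⟨ha, hb⟩ := eq_div_of_forall_splitRegPairObj_le hld hdc ht
      (by rwa [abs_of_neg hneg] at hr) hmin'
    rw [hsoft, neg_div]
    constructor <;> linarith
  · rw [abs_of_nonneg hnonneg] at hr
    rw [soft_of_lt ht hr]
    exact eq_div_of_forall_splitRegPairObj_le hld hdc ht hr hmin

theorem splitreg_orthogonal_small_ld_general
    {n p : ℕ} (y : Fin n → ℝ) (X : Matrix (Fin n) (Fin p) ℝ)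
    (α lam_s lam_d : ℝ) (hα : α ∈ Set.Icc (0 : ℝ) 1) (hs : 0 ≤ lam_s) (hd : 0 ≤ lam_d)
    (horth : ∀ j k : Fin p, (1 / (n : ℝ)) * ∑ i, X i j * X i k = if j = k then 1 else 0)
    (βhat : Fin 2 → Fin p → ℝ)
    (hmin : ∀ b : Fin 2 → Fin p → ℝ,
      splitRegObj y X α lam_s lam_d βhat ≤ splitRegObj y X α lam_s lam_d b)
    (j : Fin p)
    (hr : α * lam_s < |(1 / (n : ℝ)) * ∑ i, y i * X i j|)
    (hld : lam_d < 1 + (1 - α) * lam_s) :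
    βhat 0 j = soft ((1 / (n : ℝ)) * ∑ i, y i * X i j) (α * lam_s)
        / (1 + (1 - α) * lam_s + lam_d) ∧
    βhat 1 j = soft ((1 / (n : ℝ)) * ∑ i, y i * X i j) (α * lam_s)
        / (1 + (1 - α) * lam_s + lam_d) := by
  refine eq_soft_div_of_forall_splitRegPairObj_le hd hld (mul_nonneg hα.1 hs) hr fun a b => ?_
  refine le_apply_of_forall_sum_le
    (f := fun k (v : ℝ × ℝ) => splitRegPairObj (1 + (1 - α) * lam_s) lam_d (α * lam_s)
      ((1 / (n : ℝ)) * ∑ i, y i * X i k) v.1 v.2)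
    (x := fun k => (βhat 0 k, βhat 1 k)) (fun x' => ?_) j (a, b)
  simpa only [splitRegObj_eq_sum_splitRegPairObj y X α lam_s lam_d horth, add_le_add_iff_left,
    Matrix.cons_val_zero, Matrix.cons_val_one] using hmin ![fun k => (x' k).1, fun k => (x' k).2]

/-- **Proposition 1, part 2(a) (orthogonal design, `G = 2`).**
If `|r_j| > α λ_s` and `λ_d < 1 + (1-α) λ_s`, then for any global minimizer of the
SplitReg objective the `j`-th coefficients of the two models are both equal to
`soft(r_j, α λ_s) / (1 + (1-α) λ_s + λ_d)`. -/
theorem splitreg_orthogonal_small_ld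
    {n p : ℕ} (hn : 0 < n) (y : Fin n → ℝ) (X : Matrix (Fin n) (Fin p) ℝ)
    (α lam_s lam_d : ℝ) (hα : α ∈ Set.Icc (0 : ℝ) 1) (hs : 0 ≤ lam_s) (hd : 0 ≤ lam_d)
    (horth : ∀ j k : Fin p, (1 / (n : ℝ)) * ∑ i, X i j * X i k = if j = k then 1 else 0)
    (βhat : Fin 2 → Fin p → ℝ)
    (hmin : ∀ b : Fin 2 → Fin p → ℝ,
      splitRegObj y X α lam_s lam_d βhat ≤ splitRegObj y X α lam_s lam_d b)
    (j : Fin p)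
    (hr : α * lam_s < |(1 / (n : ℝ)) * ∑ i, y i * X i j|)
    (hld : lam_d < 1 + (1 - α) * lam_s) :
    βhat 0 j = soft ((1 / (n : ℝ)) * ∑ i, y i * X i j) (α * lam_s)
        / (1 + (1 - α) * lam_s + lam_d) ∧
    βhat 1 j = soft ((1 / (n : ℝ)) * ∑ i, y i * X i j) (α * lam_s)
        / (1 + (1 - α) * lam_s + lam_d) :=
  splitreg_orthogonal_small_ld_general y X α lam_s lam_d hα hs hd horth βhat hmin j hr hld
end

section
/- Let G = 2, suppose (1/n)XᵀX = I_p, and let r_j = (1/n)⟨y, x^j⟩. Let α ∈ [0,1], λ_s, λ_d ≥ 0 with |r_j| > α λ_s and λ_d = 1 + (1−α)λ_s. Then for any pair (b¹, b²) ∈ ℝ² with b¹·b² ≥ 0 and b¹ + b² = soft(r_j, α λ_s)/(1 + (1−α)λ_s), there exists a global minimizer (β̂¹, β̂²) of the SplitReg objective whose j-th coordinates equal (b¹, b²); more precisely, modifying any global minimizer by setting its j-th coordinates in the two groups to (b¹, b²) yields again a global minimizer. -/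
open Finset

open Matrix

/-! With `(1/n) XᵀX = I` the objective separates over coordinates: coordinate `k` contributes
`-r_k (u + v) + c/2 (u² + v²) + α λ_s (|u| + |v|) + λ_d |u| |v|` with `c = 1 + (1 - α) λ_s`.
When `λ_d = c` this is the scalar elastic-net objective `-r_k s + c/2 s² + α λ_s |s|` at `s = u + v`
plus `c (|uv| - uv) + α λ_s (|u| + |v| - |u + v|)`, two nonnegative gaps that both vanish when
`uv ≥ 0`. The scalar objective is minimised at `soft(r_k, α λ_s) / c` (its subgradient optimality
condition), so every same-sign split of that value minimises coordinate `j`, and the other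
coordinates are left as in the given minimiser. -/

lemma abs_sub_soft_le (z : ℝ) {t : ℝ} (ht : 0 ≤ t) : |z - soft z t| ≤ t := by
  unfold soft
  rcases lt_trichotomy z 0 with hz | rfl | hz
  · rw [Real.sign_of_neg hz, abs_of_neg hz]
    rcases le_total (-z - t) 0 with h | h
    · rw [max_eq_left h, abs_le]; constructor <;> linarith
    · rw [max_eq_right h, abs_le]; constructor <;> linarith
  · simpa using ht
  · rw [Real.sign_of_pos hz, abs_of_pos hz]
    rcases le_total (z - t) 0 with h | h
    · rw [max_eq_left h, abs_le]; constructor <;> linarith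
    · rw [max_eq_right h, abs_le]; constructor <;> linarith

lemma sub_soft_mul_soft (z t : ℝ) : (z - soft z t) * soft z t = t * |soft z t| := by
  unfold soft
  rcases lt_trichotomy z 0 with hz | rfl | hz
  · rw [Real.sign_of_neg hz, abs_of_neg hz]
    rcases le_total (-z - t) 0 with h | h
    · simp [max_eq_left h]
    · rw [max_eq_right h, abs_of_nonpos (by linarith)]; ring
  · simp
  · rw [Real.sign_of_pos hz, abs_of_pos hz]
    rcases le_total (z - t) 0 with h | h
    · simp [max_eq_left h]
    · rw [max_eq_right h, abs_of_nonneg (by linarith)]; ring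

noncomputable def scalarLassoObj (r c t s : ℝ) : ℝ := -(r * s) + c / 2 * s ^ 2 + t * |s|

lemma scalarLassoObj_le_of_subgradient {r c t g s₀ : ℝ} (hc : 0 ≤ c) (hg : |g| ≤ t)
    (hgs : g * s₀ = t * |s₀|) (hopt : c * s₀ = r - g) (s : ℝ) :
    scalarLassoObj r c t s₀ ≤ scalarLassoObj r c t s := by
  have hgs' : g * s ≤ t * |s| :=
    calc g * s ≤ |g| * |s| := by rw [← abs_mul]; exact le_abs_self _
      _ ≤ t * |s| := by gcongr
  obtain rfl : r = c * s₀ + g := by linarith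
  -- the gap is `c / 2 * (s - s₀) ^ 2 + (t * |s| - g * s)`
  unfold scalarLassoObj
  nlinarith [mul_nonneg hc (sq_nonneg (s - s₀))]

lemma scalarLassoObj_soft_div_le {r c t : ℝ} (hc : 0 < c) (ht : 0 ≤ t) (s : ℝ) :
    scalarLassoObj r c t (soft r t / c) ≤ scalarLassoObj r c t s := by
  refine scalarLassoObj_le_of_subgradient hc.le (abs_sub_soft_le r ht) ?_ ?_ s
  · rw [abs_div, abs_of_pos hc, mul_div_assoc', mul_div_assoc', sub_soft_mul_soft]
  · rw [mul_div_cancel₀ _ hc.ne']; ring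

noncomputable def splitCoordObj (r c t d u v : ℝ) : ℝ :=
  -(r * (u + v)) + c / 2 * (u ^ 2 + v ^ 2) + t * (|u| + |v|) + d * (|u| * |v|)

lemma splitCoordObj_self_eq (r c t u v : ℝ) :
    splitCoordObj r c t c u v = scalarLassoObj r c t (u + v)
      + c * (|u * v| - u * v) + t * (|u| + |v| - |u + v|) := by
  unfold splitCoordObj scalarLassoObj
  rw [abs_mul]; ring

lemma splitCoordObj_self_eq_of_mul_nonneg {r c t u v : ℝ} (huv : 0 ≤ u * v) :
    splitCoordObj r c t c u v = scalarLassoObj r c t (u + v) := by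
  rw [splitCoordObj_self_eq, abs_of_nonneg huv,
    (abs_add_eq_add_abs_iff u v).mpr (mul_nonneg_iff.mp huv)]
  ring

lemma scalarLassoObj_add_le_splitCoordObj_self {r c t : ℝ} (hc : 0 ≤ c) (ht : 0 ≤ t) (u v : ℝ) :
    scalarLassoObj r c t (u + v) ≤ splitCoordObj r c t c u v := by
  rw [splitCoordObj_self_eq]
  have h₁ : 0 ≤ c * (|u * v| - u * v) := mul_nonneg hc (sub_nonneg.mpr (le_abs_self _))
  have h₂ : 0 ≤ t * (|u| + |v| - |u + v|) := mul_nonneg ht (sub_nonneg.mpr (abs_add_le u v))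
  linarith

lemma sum_sq_sub_mulVec {R m p : Type*} [CommRing R] [Fintype m] [Fintype p] (X : Matrix m p R)
    (y : m → R) (b : p → R) :
    ∑ i, (y i - (X *ᵥ b) i) ^ 2
      = y ⬝ᵥ y - 2 * (y ᵥ* X) ⬝ᵥ b + b ⬝ᵥ ((Xᵀ * X) *ᵥ b) := by
  have : ∑ i, (y i - (X *ᵥ b) i) ^ 2 = (y - X *ᵥ b) ⬝ᵥ (y - X *ᵥ b) := by
    simp only [dotProduct, sq, Pi.sub_apply]
  rw [this, sub_dotProduct, dotProduct_sub, dotProduct_sub, dotProduct_comm (X *ᵥ b) y,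
    dotProduct_mulVec, dotProduct_mulVec, dotProduct_mulVec, ← vecMul_transpose,
    vecMul_vecMul]
  ring

lemma lsLoss_eq_of_orthonormal {n p : ℕ} (y : Fin n → ℝ) (X : Matrix (Fin n) (Fin p) ℝ)
    (horth : ∀ j k : Fin p, (1 / (n : ℝ)) * ∑ i, X i j * X i k = if j = k then 1 else 0)
    (b : Fin p → ℝ) :
    1 / (2 * (n : ℝ)) * ∑ i, (y i - ∑ k, X i k * b k) ^ 2
      = 1 / (2 * (n : ℝ)) * ∑ i, y i ^ 2
        + ∑ k, (b k ^ 2 / 2 - (1 / (n : ℝ)) * (∑ i, y i * X i k) * b k) := by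
  have hgram : (1 / (n : ℝ)) • (Xᵀ * X) = 1 := by
    ext j k
    simpa [Matrix.mul_apply, Matrix.one_apply] using horth j k
  have hquad : (1 / (n : ℝ)) * b ⬝ᵥ ((Xᵀ * X) *ᵥ b) = b ⬝ᵥ b := by
    rw [← smul_eq_mul, ← dotProduct_smul, ← smul_mulVec, hgram, one_mulVec]
  calc 1 / (2 * (n : ℝ)) * ∑ i, (y i - ∑ k, X i k * b k) ^ 2
      = 1 / (2 * (n : ℝ)) * (y ⬝ᵥ y - 2 * (y ᵥ* X) ⬝ᵥ b + b ⬝ᵥ ((Xᵀ * X) *ᵥ b)) := by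
        rw [← sum_sq_sub_mulVec]; rfl
    _ = 1 / (2 * (n : ℝ)) * y ⬝ᵥ y + (b ⬝ᵥ b / 2 - ((1 / (n : ℝ)) • (y ᵥ* X)) ⬝ᵥ b) := by
        rw [← hquad, smul_dotProduct, smul_eq_mul]; ring
    _ = _ := by
        simp only [sum_sub_distrib, ← sum_div, dotProduct, vecMul, Pi.smul_apply, smul_eq_mul, sq]

lemma splitRegObj_two_eq_of_orthonormal {n p : ℕ} (y : Fin n → ℝ) (X : Matrix (Fin n) (Fin p) ℝ)
    (α lam_s lam_d : ℝ)
    (horth : ∀ j k : Fin p, (1 / (n : ℝ)) * ∑ i, X i j * X i k = if j = k then 1 else 0)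
    (β : Fin 2 → Fin p → ℝ) :
    splitRegObj y X α lam_s lam_d β
      = 1 / (n : ℝ) * ∑ i, y i ^ 2
        + ∑ k, splitCoordObj ((1 / (n : ℝ)) * ∑ i, y i * X i k) (1 + (1 - α) * lam_s)
            (α * lam_s) lam_d (β 0 k) (β 1 k) := by
  have h₀ : univ.erase (0 : Fin 2) = {1} := rfl
  have h₁ : univ.erase (1 : Fin 2) = {0} := rfl
  have hcoord : ∀ k, splitCoordObj ((1 / (n : ℝ)) * ∑ i, y i * X i k) (1 + (1 - α) * lam_s)
      (α * lam_s) lam_d (β 0 k) (β 1 k)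
      = (β 0 k ^ 2 / 2 - (1 / (n : ℝ)) * (∑ i, y i * X i k) * β 0 k)
        + (β 1 k ^ 2 / 2 - (1 / (n : ℝ)) * (∑ i, y i * X i k) * β 1 k)
        + lam_s * ((1 - α) / 2 * β 0 k ^ 2 + α * |β 0 k|)
        + lam_s * ((1 - α) / 2 * β 1 k ^ 2 + α * |β 1 k|)
        + lam_d / 2 * (|β 0 k| * |β 1 k|) + lam_d / 2 * (|β 1 k| * |β 0 k|) := by
    intro k; unfold splitCoordObj; ring
  simp only [splitRegObj, Fin.sum_univ_two, h₀, h₁, sum_singleton,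
    lsLoss_eq_of_orthonormal y X horth, hcoord, sum_add_distrib, ← mul_sum]
  ring

lemma splitCoordObj_self_le_of_mul_nonneg {r c t b₁ b₂ : ℝ} (hc : 0 < c) (ht : 0 ≤ t)
    (hsign : 0 ≤ b₁ * b₂) (hsum : b₁ + b₂ = soft r t / c) (u v : ℝ) :
    splitCoordObj r c t c b₁ b₂ ≤ splitCoordObj r c t c u v :=
  calc splitCoordObj r c t c b₁ b₂ = scalarLassoObj r c t (soft r t / c) := by
        rw [splitCoordObj_self_eq_of_mul_nonneg hsign, hsum]
    _ ≤ scalarLassoObj r c t (u + v) := scalarLassoObj_soft_div_le hc ht (u + v)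
    _ ≤ splitCoordObj r c t c u v := scalarLassoObj_add_le_splitCoordObj_self hc.le ht u v

theorem splitreg_orthogonal_critical_ld_general
    {n p : ℕ} (y : Fin n → ℝ) (X : Matrix (Fin n) (Fin p) ℝ)
    (α lam_s lam_d : ℝ) (hα : α ∈ Set.Icc (0 : ℝ) 1) (hs : 0 ≤ lam_s)
    (horth : ∀ j k : Fin p, (1 / (n : ℝ)) * ∑ i, X i j * X i k = if j = k then 1 else 0)
    (βhat : Fin 2 → Fin p → ℝ)
    (hmin : ∀ b : Fin 2 → Fin p → ℝ,
      splitRegObj y X α lam_s lam_d βhat ≤ splitRegObj y X α lam_s lam_d b)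
    (j : Fin p)
    (hld : lam_d = 1 + (1 - α) * lam_s)
    (b₁ b₂ : ℝ) (hsign : 0 ≤ b₁ * b₂)
    (hsum : b₁ + b₂ = soft ((1 / (n : ℝ)) * ∑ i, y i * X i j) (α * lam_s)
        / (1 + (1 - α) * lam_s)) :
    ∀ b : Fin 2 → Fin p → ℝ,
      splitRegObj y X α lam_s lam_d
          (fun g k => if k = j then (if g = 0 then b₁ else b₂) else βhat g k)
        ≤ splitRegObj y X α lam_s lam_d b := by
  intro b
  refine le_trans ?_ (hmin b)
  have hc : 0 < 1 + (1 - α) * lam_s := by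
    have := mul_nonneg (sub_nonneg.mpr hα.2) hs
    linarith
  have ht : 0 ≤ α * lam_s := mul_nonneg hα.1 hs
  subst hld
  rw [splitRegObj_two_eq_of_orthonormal y X _ _ _ horth,
    splitRegObj_two_eq_of_orthonormal y X _ _ _ horth]
  gcongr with k
  by_cases hk : k = j
  · subst hk
    simpa using splitCoordObj_self_le_of_mul_nonneg hc ht hsign hsum _ _
  · simp [hk]

/-- **Proposition 1, part 2(b) (orthogonal design, `G = 2`).**
If `|r_j| > α λ_s` and `λ_d = 1 + (1-α) λ_s`, then modifying any global minimizer of the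
SplitReg objective by replacing its `j`-th coordinates in the two groups by any pair
`(b₁, b₂)` with `b₁ b₂ ≥ 0` and `b₁ + b₂ = soft(r_j, α λ_s)/(1 + (1-α) λ_s)` again
yields a global minimizer. -/
theorem splitreg_orthogonal_critical_ld
    {n p : ℕ} (hn : 0 < n) (y : Fin n → ℝ) (X : Matrix (Fin n) (Fin p) ℝ)
    (α lam_s lam_d : ℝ) (hα : α ∈ Set.Icc (0 : ℝ) 1) (hs : 0 ≤ lam_s) (hd : 0 ≤ lam_d)
    (horth : ∀ j k : Fin p, (1 / (n : ℝ)) * ∑ i, X i j * X i k = if j = k then 1 else 0)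
    (βhat : Fin 2 → Fin p → ℝ)
    (hmin : ∀ b : Fin 2 → Fin p → ℝ,
      splitRegObj y X α lam_s lam_d βhat ≤ splitRegObj y X α lam_s lam_d b)
    (j : Fin p)
    (hr : α * lam_s < |(1 / (n : ℝ)) * ∑ i, y i * X i j|)
    (hld : lam_d = 1 + (1 - α) * lam_s)
    (b₁ b₂ : ℝ) (hsign : 0 ≤ b₁ * b₂)
    (hsum : b₁ + b₂ = soft ((1 / (n : ℝ)) * ∑ i, y i * X i j) (α * lam_s)
        / (1 + (1 - α) * lam_s)) :
    ∀ b : Fin 2 → Fin p → ℝ,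
      splitRegObj y X α lam_s lam_d
          (fun g k => if k = j then (if g = 0 then b₁ else b₂) else βhat g k)
        ≤ splitRegObj y X α lam_s lam_d b :=
  splitreg_orthogonal_critical_ld_general y X α lam_s lam_d hα hs horth βhat hmin j hld b₁ b₂ hsign
    hsum
end

section
/- Let G = 2, suppose (1/n)XᵀX = I_p, and let r_j = (1/n)⟨y, x^j⟩. Let α ∈ [0,1], λ_s, λ_d ≥ 0, and let (β̂¹, β̂²) be any global minimizer of the SplitReg objective. If |r_j| > α λ_s and λ_d > 1 + (1−α)λ_s, then exactly one of β̂¹_j, β̂²_j is zero, and the nonzero one equals soft(r_j, α λ_s)/(1 + (1−α)λ_s). -/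
open Finset

/-!
With `(1/n) XᵀX = I` the objective is a constant plus a sum over coordinates `j` of
`f(β¹_j) + f(β²_j) + λ_d |β¹_j| |β²_j|`, where `f t = -r_j t + c/2 t² + s |t|` (`enetScalarObj`)
with `c = 1 + (1 - α) λ_s` and `s = α λ_s`; so a global minimizer minimizes every coordinate pair.
If both coordinates `u, v` were nonzero, putting all the mass `|u| + |v|` on one of them, with
the sign of `r_j`, would lower the pair objective by at least `(λ_d - c) |u| |v| > 0`. Once one
coordinate vanishes, the other minimizes `f`, whose unique minimizer is `soft(r_j, s) / c ≠ 0`.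
-/

open Matrix

namespace Real

theorem sign_mul_self_eq_abs (r : ℝ) : sign r * r = |r| := by
  rcases lt_trichotomy r 0 with h | rfl | h
  · rw [sign_of_neg h, abs_of_neg h]; ring
  · simp
  · rw [sign_of_pos h, abs_of_pos h, one_mul]

theorem abs_sign_of_ne_zero {r : ℝ} (hr : r ≠ 0) : |sign r| = 1 := by
  rcases sign_apply_eq_of_ne_zero r hr with h | h <;> simp [h]

end Real

theorem apply_le_of_forall_sum_le {ι α M : Type*} [Fintype ι] [DecidableEq ι] [AddCommGroup M]
    [PartialOrder M] [IsOrderedAddMonoid M] (F : ι → α → M)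
    {x₀ : ι → α} (h : ∀ x : ι → α, ∑ k, F k (x₀ k) ≤ ∑ k, F k (x k)) (j : ι) (a : α) :
    F j (x₀ j) ≤ F j a := by
  have h' := h (Function.update x₀ j a)
  rw [← sub_nonneg, ← sum_sub_distrib,
    sum_eq_single j (fun k _ hk => by simp [Function.update_of_ne hk]) (by simp)] at h'
  simpa using h'

noncomputable def enetScalarObj (r c s t : ℝ) : ℝ := -(r * t) + c / 2 * t ^ 2 + s * |t|

section enetScalarObj

variable {r c s : ℝ}

theorem enetScalarObj_zero : enetScalarObj r c s 0 = 0 := by simp [enetScalarObj]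

theorem le_enetScalarObj (t : ℝ) :
    -(|r| - s) * |t| + c / 2 * |t| ^ 2 ≤ enetScalarObj r c s t := by
  have : r * t ≤ |r| * |t| := (le_abs_self _).trans_eq (abs_mul r t)
  rw [enetScalarObj, sq_abs]
  linarith

theorem enetScalarObj_sign_mul (hr : r ≠ 0) {w : ℝ} (hw : 0 ≤ w) :
    enetScalarObj r c s (Real.sign r * w) = -(|r| - s) * w + c / 2 * w ^ 2 := by
  have habs : |Real.sign r * w| = w := by
    rw [abs_mul, Real.abs_sign_of_ne_zero hr, one_mul, abs_of_nonneg hw]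
  have hsq : (Real.sign r * w) ^ 2 = w ^ 2 := by rw [← sq_abs, habs]
  rw [enetScalarObj, habs, hsq, ← mul_assoc, mul_comm r, Real.sign_mul_self_eq_abs]
  ring

theorem soft_of_le_abs (hs : s ≤ |r|) : soft r s = Real.sign r * (|r| - s) := by
  rw [soft, max_eq_right (sub_nonneg.mpr hs)]

theorem eq_soft_div_of_forall_le (hr : r ≠ 0) (hc : 0 < c) (hs : s < |r|) {t : ℝ}
    (ht : ∀ u, enetScalarObj r c s t ≤ enetScalarObj r c s u) : t = soft r s / c := by
  obtain ⟨m, hm⟩ : ∃ m, m = (|r| - s) / c := ⟨_, rfl⟩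
  have hcm : c * m = |r| - s := by rw [hm]; field_simp
  have hmin := ht (Real.sign r * m)
  rw [enetScalarObj_sign_mul hr (hm ▸ div_pos (by linarith) hc).le] at hmin
  -- the lower bound equals `c/2 (|t| - m)^2 - c/2 m^2`, so `|t| = m` and then `r t = |r| |t|`
  have hsq : c / 2 * (|t| - m) ^ 2 ≤ 0 := by
    linear_combination hmin + le_enetScalarObj t - (|t| - m) * hcm
  have habs : |t| = m := by
    have := (mul_nonpos_iff_pos_imp_nonpos.mp hsq).1 (by positivity)
    nlinarith [sq_nonneg (|t| - m)]
  have hrt : r * t = |r| * |t| := by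
    have : r * t ≤ |r| * |t| := (le_abs_self _).trans_eq (abs_mul r t)
    rw [habs] at this ⊢
    rw [enetScalarObj, ← sq_abs, habs] at hmin
    linarith
  rw [soft_of_le_abs hs.le, mul_div_assoc, ← hm, ← habs]
  refine mul_left_cancel₀ hr ?_
  rw [hrt, ← mul_assoc, mul_comm r, Real.sign_mul_self_eq_abs]

theorem eq_zero_or_eq_zero_of_forall_le_pair (hr : r ≠ 0) {lam u v : ℝ} (hlam : c < lam)
    (h : ∀ a b, enetScalarObj r c s u + enetScalarObj r c s v + lam * (|u| * |v|)
      ≤ enetScalarObj r c s a + enetScalarObj r c s b + lam * (|a| * |b|)) :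
    u = 0 ∨ v = 0 := by
  have hmerge := h (Real.sign r * (|u| + |v|)) 0
  rw [enetScalarObj_sign_mul hr (by positivity), enetScalarObj_zero, abs_zero, mul_zero,
    mul_zero, add_zero] at hmerge
  have hgain : (lam - c) * (|u| * |v|) ≤ 0 := by
    nlinarith [le_enetScalarObj (r := r) (c := c) (s := s) u,
      le_enetScalarObj (r := r) (c := c) (s := s) v]
  have huv : |u * v| ≤ 0 := by
    rw [abs_mul]; exact nonpos_of_mul_nonpos_right hgain (sub_pos.mpr hlam)
  exact mul_eq_zero.mp (abs_nonpos_iff.mp huv)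

theorem eq_soft_div_of_forall_le_pair (hs0 : 0 ≤ s) (hc : 0 < c) (hs : s < |r|) {lam u v : ℝ}
    (hlam : c < lam)
    (h : ∀ a b, enetScalarObj r c s u + enetScalarObj r c s v + lam * (|u| * |v|)
      ≤ enetScalarObj r c s a + enetScalarObj r c s b + lam * (|a| * |b|)) :
    (u = 0 ∧ v ≠ 0 ∧ v = soft r s / c) ∨ (v = 0 ∧ u ≠ 0 ∧ u = soft r s / c) := by
  have hr : r ≠ 0 := abs_pos.mp (hs0.trans_lt hs)
  have hsoft : soft r s / c ≠ 0 := by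
    rw [soft_of_le_abs hs.le]
    exact div_ne_zero (mul_ne_zero (by simpa [Real.sign_eq_zero_iff]) (by linarith)) hc.ne'
  rcases eq_zero_or_eq_zero_of_forall_le_pair hr hlam h with rfl | rfl
  · have hv : v = soft r s / c := eq_soft_div_of_forall_le hr hc hs fun b => by
      simpa [enetScalarObj_zero] using h 0 b
    exact Or.inl ⟨rfl, hv ▸ hsoft, hv⟩
  · have hu : u = soft r s / c := eq_soft_div_of_forall_le hr hc hs fun a => by
      simpa [enetScalarObj_zero] using h a 0
    exact Or.inr ⟨rfl, hu ▸ hsoft, hu⟩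

end enetScalarObj

theorem sub_mulVec_dotProduct_sub_mulVec {m k : Type*} [Fintype m] [Fintype k] [DecidableEq k]
    {X : Matrix m k ℝ} {c : ℝ} (hX : Xᵀ * X = c • 1) (y : m → ℝ) (v : k → ℝ) :
    (y - X *ᵥ v) ⬝ᵥ (y - X *ᵥ v) = y ⬝ᵥ y - 2 * ((y ᵥ* X) ⬝ᵥ v) + c * (v ⬝ᵥ v) := by
  have hXX : (X *ᵥ v) ⬝ᵥ (X *ᵥ v) = c * (v ⬝ᵥ v) := by
    rw [dotProduct_mulVec, ← vecMul_transpose, vecMul_vecMul, hX, vecMul_smul, vecMul_one,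
      smul_dotProduct, smul_eq_mul]
  rw [sub_dotProduct, dotProduct_sub, dotProduct_sub, hXX, dotProduct_comm (X *ᵥ v) y,
    dotProduct_mulVec]
  ring

theorem transpose_mul_self_eq_smul_one {n p : ℕ} (hn : 0 < n) {X : Matrix (Fin n) (Fin p) ℝ}
    (horth : ∀ j k : Fin p, (1 / (n : ℝ)) * ∑ i, X i j * X i k = if j = k then 1 else 0) :
    Xᵀ * X = (n : ℝ) • 1 := by
  ext j k
  have h := horth j k
  rw [one_div, inv_mul_eq_iff_eq_mul₀ (by positivity)] at h
  simpa [mul_apply, one_apply] using h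

theorem leastSquares_add_enetPenalty_eq {n p : ℕ} (hn : 0 < n) (y : Fin n → ℝ)
    {X : Matrix (Fin n) (Fin p) ℝ}
    (horth : ∀ j k : Fin p, (1 / (n : ℝ)) * ∑ i, X i j * X i k = if j = k then 1 else 0)
    (α lam_s : ℝ) (v : Fin p → ℝ) :
    (1 / (2 * (n : ℝ))) * ∑ i, (y i - ∑ j, X i j * v j) ^ 2
        + lam_s * ((1 - α) / 2 * ∑ j, (v j) ^ 2 + α * ∑ j, |v j|)
      = (1 / (2 * (n : ℝ))) * ∑ i, y i ^ 2
        + ∑ j, enetScalarObj ((1 / (n : ℝ)) * ∑ i, y i * X i j) (1 + (1 - α) * lam_s)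
          (α * lam_s) (v j) := by
  have h := sub_mulVec_dotProduct_sub_mulVec (transpose_mul_self_eq_smul_one hn horth) y v
  simp only [dotProduct, vecMul, mulVec, Pi.sub_apply] at h
  have hr : ∑ j, -((1 / (n : ℝ)) * (∑ i, y i * X i j) * v j)
      = -(1 / (n : ℝ)) * ∑ j, (∑ i, y i * X i j) * v j := by
    rw [mul_sum]; exact sum_congr rfl fun _ _ => by ring
  simp only [enetScalarObj, sq, sum_add_distrib, ← mul_sum] at h ⊢
  rw [h, hr]
  field_simp
  ring

theorem splitRegObj_two_eq {n p : ℕ} (hn : 0 < n) (y : Fin n → ℝ) {X : Matrix (Fin n) (Fin p) ℝ}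
    (horth : ∀ j k : Fin p, (1 / (n : ℝ)) * ∑ i, X i j * X i k = if j = k then 1 else 0)
    (α lam_s lam_d : ℝ) (β : Fin 2 → Fin p → ℝ) :
    splitRegObj y X α lam_s lam_d β = (1 / (n : ℝ)) * ∑ i, y i ^ 2 + ∑ j,
      (enetScalarObj ((1 / (n : ℝ)) * ∑ i, y i * X i j) (1 + (1 - α) * lam_s) (α * lam_s) (β 0 j)
        + enetScalarObj ((1 / (n : ℝ)) * ∑ i, y i * X i j) (1 + (1 - α) * lam_s) (α * lam_s)
          (β 1 j)
        + lam_d * (|β 0 j| * |β 1 j|)) := by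
  have herase0 : univ.erase (0 : Fin 2) = {1} := by decide
  have herase1 : univ.erase (1 : Fin 2) = {0} := by decide
  have hcomm : ∑ j, |β 1 j| * |β 0 j| = ∑ j, |β 0 j| * |β 1 j| :=
    sum_congr rfl fun _ _ => mul_comm _ _
  rw [splitRegObj, Fin.sum_univ_two, herase0, herase1, sum_singleton, sum_singleton,
    leastSquares_add_enetPenalty_eq hn y horth α lam_s (β 0),
    leastSquares_add_enetPenalty_eq hn y horth α lam_s (β 1), hcomm, sum_add_distrib,
    sum_add_distrib, ← mul_sum]
  ring

theorem splitreg_orthogonal_large_ld_general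
    {n p : ℕ} (hn : 0 < n) (y : Fin n → ℝ) (X : Matrix (Fin n) (Fin p) ℝ)
    (α lam_s lam_d : ℝ) (hα : α ∈ Set.Icc (0 : ℝ) 1) (hs : 0 ≤ lam_s)
    (horth : ∀ j k : Fin p, (1 / (n : ℝ)) * ∑ i, X i j * X i k = if j = k then 1 else 0)
    (βhat : Fin 2 → Fin p → ℝ)
    (hmin : ∀ b : Fin 2 → Fin p → ℝ,
      splitRegObj y X α lam_s lam_d βhat ≤ splitRegObj y X α lam_s lam_d b)
    (j : Fin p)
    (hr : α * lam_s < |(1 / (n : ℝ)) * ∑ i, y i * X i j|)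
    (hld : 1 + (1 - α) * lam_s < lam_d) :
    (βhat 0 j = 0 ∧ βhat 1 j ≠ 0 ∧
      βhat 1 j = soft ((1 / (n : ℝ)) * ∑ i, y i * X i j) (α * lam_s)
        / (1 + (1 - α) * lam_s)) ∨
    (βhat 1 j = 0 ∧ βhat 0 j ≠ 0 ∧
      βhat 0 j = soft ((1 / (n : ℝ)) * ∑ i, y i * X i j) (α * lam_s)
        / (1 + (1 - α) * lam_s)) := by
  have hc : 0 < 1 + (1 - α) * lam_s := by nlinarith [hα.2]
  have hcoord := apply_le_of_forall_sum_le
    (fun k (x : ℝ × ℝ) => enetScalarObj ((1 / (n : ℝ)) * ∑ i, y i * X i k)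
        (1 + (1 - α) * lam_s) (α * lam_s) x.1
      + enetScalarObj ((1 / (n : ℝ)) * ∑ i, y i * X i k) (1 + (1 - α) * lam_s) (α * lam_s) x.2
      + lam_d * (|x.1| * |x.2|))
    (x₀ := fun k => (βhat 0 k, βhat 1 k)) (fun x => by
      have h := hmin ![fun k => (x k).1, fun k => (x k).2]
      rw [splitRegObj_two_eq hn y horth, splitRegObj_two_eq hn y horth] at h
      simpa using h) j
  exact eq_soft_div_of_forall_le_pair (mul_nonneg hα.1 hs) hc hr hld fun a b => hcoord (a, b)

/-- **Proposition 1, part 2(c) (orthogonal design, `G = 2`).**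
If `|r_j| > α λ_s` and `λ_d > 1 + (1-α) λ_s`, then for any global minimizer of the
SplitReg objective exactly one of the `j`-th coefficients of the two models is zero,
and the nonzero one equals `soft(r_j, α λ_s)/(1 + (1-α) λ_s)`. -/
theorem splitreg_orthogonal_large_ld
    {n p : ℕ} (hn : 0 < n) (y : Fin n → ℝ) (X : Matrix (Fin n) (Fin p) ℝ)
    (α lam_s lam_d : ℝ) (hα : α ∈ Set.Icc (0 : ℝ) 1) (hs : 0 ≤ lam_s) (hd : 0 ≤ lam_d)
    (horth : ∀ j k : Fin p, (1 / (n : ℝ)) * ∑ i, X i j * X i k = if j = k then 1 else 0)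
    (βhat : Fin 2 → Fin p → ℝ)
    (hmin : ∀ b : Fin 2 → Fin p → ℝ,
      splitRegObj y X α lam_s lam_d βhat ≤ splitRegObj y X α lam_s lam_d b)
    (j : Fin p)
    (hr : α * lam_s < |(1 / (n : ℝ)) * ∑ i, y i * X i j|)
    (hld : 1 + (1 - α) * lam_s < lam_d) :
    (βhat 0 j = 0 ∧ βhat 1 j ≠ 0 ∧
      βhat 1 j = soft ((1 / (n : ℝ)) * ∑ i, y i * X i j) (α * lam_s)
        / (1 + (1 - α) * lam_s)) ∨
    (βhat 1 j = 0 ∧ βhat 0 j ≠ 0 ∧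
      βhat 0 j = soft ((1 / (n : ℝ)) * ∑ i, y i * X i j) (α * lam_s)
        / (1 + (1 - α) * lam_s)) :=
  splitreg_orthogonal_large_ld_general hn y X α lam_s lam_d hα hs horth βhat hmin j hr hld
end

section
/- Let p = 2 and G = 2, with X ∈ ℝ^{n×2} whose columns each have squared Euclidean norm n. Let ρ = (1/n)⟨x¹, x²⟩, r_j = (1/n)⟨y, x^j⟩ for j = 1,2, λ_s = 0, λ_d ≥ 0, and let (β̂¹, β̂²) be a global minimizer of the SplitReg objective in which both variables are active in both models (all four coefficients nonzero). If sign(β̂¹₁) = sign(β̂²₁) and sign(β̂¹₂) = sign(β̂²₂), then the vector (β̂¹₁, β̂²₁, β̂²₂, β̂¹₂) solves the linear system M·(β̂¹₁, β̂²₁, β̂²₂, β̂¹₂)ᵀ = (r₁, r₁, r₂, r₂)ᵀ, where M is the 4×4 matrix with rows (1, λ_d, 0, ρ), (λ_d, 1, ρ, 0), (0, ρ, 1, λ_d), (ρ, 0, λ_d, 1). -/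
open Finset

lemma obj_eval {n : ℕ} (y : Fin n → ℝ) (X : Matrix (Fin n) (Fin 2) ℝ)
    (α lam_d : ℝ) (β : Fin 2 → Fin 2 → ℝ) :
    splitRegObj y X α 0 lam_d β
      = (1 / (2 * (n:ℝ))) * ∑ i, (y i - X i 0 * β 0 0 - X i 1 * β 0 1) ^ 2
      + (1 / (2 * (n:ℝ))) * ∑ i, (y i - X i 0 * β 1 0 - X i 1 * β 1 1) ^ 2
      + lam_d * (|β 0 0| * |β 1 0| + |β 0 1| * |β 1 1|) := by
  have h0 : (Finset.univ.erase (0 : Fin 2)) = {1} := by decide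
  have h1 : (Finset.univ.erase (1 : Fin 2)) = {0} := by decide
  simp only [splitRegObj, Fin.sum_univ_two, h0, h1, Finset.sum_singleton,
    sub_add_eq_sub_sub]
  ring

lemma quad_zero (d t₀ : ℝ) (ht : t₀ ≠ 0)
    (h : ∀ ε : ℝ, |ε| < |t₀| → 0 ≤ ε ^ 2 / 2 + ε * d) : d = 0 := by
  by_contra hd
  have hd' : 0 < |d| := abs_pos.mpr hd
  have ht' : 0 < |t₀| := abs_pos.mpr ht
  set m := min |d| (|t₀| / 2) with hm
  have hm0 : 0 < m := lt_min hd' (by linarith)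
  have hml : m < |t₀| := lt_of_le_of_lt (min_le_right _ _) (by linarith)
  have hmd : m ≤ |d| := min_le_left _ _
  have := h (-(Real.sign d) * m) (by
    rw [abs_mul, abs_neg, show |Real.sign d| = 1 from by rcases lt_or_gt_of_ne hd with h' | h' <;> simp [Real.sign_of_neg, Real.sign_of_pos, h'], one_mul]
    simpa [abs_of_pos hm0] using hml)
  have hsd : Real.sign d * d = |d| := by
    rcases lt_or_gt_of_ne hd with h' | h'
    · rw [Real.sign_of_neg h', abs_of_neg h']; ring
    · rw [Real.sign_of_pos h', abs_of_pos h']; ring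
  have hs2 : (Real.sign d) ^ 2 = 1 := by
    rcases lt_or_gt_of_ne hd with h' | h'
    · rw [Real.sign_of_neg h']; norm_num
    · rw [Real.sign_of_pos h']; norm_num
  nlinarith [this, hsd, hs2, sq_nonneg m, mul_pos hm0 hd']

lemma abs_shift (t₀ ε : ℝ) (h : |ε| < |t₀|) :
    |t₀ + ε| = |t₀| + Real.sign t₀ * ε := by
  have ht : t₀ ≠ 0 := by rintro rfl; simp at h; linarith [abs_nonneg ε, h]
  rcases lt_or_gt_of_ne ht with h' | h'
  · have : t₀ + ε < 0 := by cases abs_lt.mp h; linarith [abs_of_neg h']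
    rw [abs_of_neg this, abs_of_neg h', Real.sign_of_neg h']; ring
  · have : 0 < t₀ + ε := by cases abs_lt.mp h; linarith [abs_of_pos h']
    rw [abs_of_pos this, abs_of_pos h', Real.sign_of_pos h']; ring

lemma coord_key {n : ℕ} (hn : 0 < n) (u w : Fin n → ℝ)
    (hu : ∑ i, u i ^ 2 = (n : ℝ)) (c t₀ : ℝ) (ht : t₀ ≠ 0)
    (h : ∀ ε : ℝ, |ε| < |t₀| →
      (1 / (2 * (n:ℝ))) * ∑ i, (w i - u i * t₀) ^ 2 + c * |t₀|
        ≤ (1 / (2 * (n:ℝ))) * ∑ i, (w i - u i * (t₀ + ε)) ^ 2 + c * |t₀ + ε|) :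
    t₀ + c * Real.sign t₀ = (1 / (n:ℝ)) * ∑ i, w i * u i := by
  have hn' : (0:ℝ) < n := Nat.cast_pos.mpr hn
  set d : ℝ := t₀ + c * Real.sign t₀ - (1 / (n:ℝ)) * ∑ i, w i * u i with hd
  have hz : d = 0 := by
    apply quad_zero d t₀ ht
    intro ε hε
    have h1 := h ε hε
    have hexp : ∑ i, (w i - u i * (t₀ + ε)) ^ 2
        = ∑ i, (w i - u i * t₀) ^ 2 - 2 * ε * ∑ i, (w i * u i)
          + (2 * ε * t₀ + ε ^ 2) * ∑ i, u i ^ 2 := by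
      rw [Finset.mul_sum, Finset.mul_sum, ← Finset.sum_sub_distrib, ← Finset.sum_add_distrib]
      exact Finset.sum_congr rfl fun i _ => by ring
    rw [hexp, hu, abs_shift t₀ ε hε] at h1
    have h3 : 0 ≤ (1 / (2 * (n:ℝ))) * (- 2 * ε * ∑ i, (w i * u i)
          + (2 * ε * t₀ + ε ^ 2) * (n:ℝ)) + c * (Real.sign t₀ * ε) := by linarith
    have h2 : (1 / (2 * (n:ℝ))) * (- 2 * ε * ∑ i, (w i * u i)
          + (2 * ε * t₀ + ε ^ 2) * (n:ℝ)) + c * (Real.sign t₀ * ε)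
        = ε ^ 2 / 2 + ε * d := by
      rw [hd]; field_simp; ring
    linarith [h2 ▸ h3]
  rw [hd] at hz
  linarith

/-- **Proposition 2, part 3 (two correlated predictors, `G = 2`, `λ_s = 0`).**
If both variables are active in both models of a global minimizer, and the signs of the
coefficients of each variable agree across the two models, then the vector
`(β̂¹₁, β̂²₁, β̂²₂, β̂¹₂)` solves the stated 4×4 linear system. -/
theorem splitreg_two_predictors_system
    {n : ℕ} (hn : 0 < n) (y : Fin n → ℝ) (X : Matrix (Fin n) (Fin 2) ℝ)
    (α lam_d : ℝ) (hα : α ∈ Set.Icc (0 : ℝ) 1) (hd : 0 ≤ lam_d)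
    (hcol : ∀ j : Fin 2, ∑ i, (X i j) ^ 2 = (n : ℝ))
    (βhat : Fin 2 → Fin 2 → ℝ)
    (hmin : ∀ b : Fin 2 → Fin 2 → ℝ,
      splitRegObj y X α 0 lam_d βhat ≤ splitRegObj y X α 0 lam_d b)
    (hact : ∀ g j : Fin 2, βhat g j ≠ 0)
    (hsign₁ : Real.sign (βhat 0 0) = Real.sign (βhat 1 0))
    (hsign₂ : Real.sign (βhat 0 1) = Real.sign (βhat 1 1)) :
    (!![(1 : ℝ), lam_d, 0, ((1 / (n : ℝ)) * ∑ i, X i 0 * X i 1);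
        lam_d, 1, ((1 / (n : ℝ)) * ∑ i, X i 0 * X i 1), 0;
        0, ((1 / (n : ℝ)) * ∑ i, X i 0 * X i 1), 1, lam_d;
        ((1 / (n : ℝ)) * ∑ i, X i 0 * X i 1), 0, lam_d, 1]).mulVec
        ![βhat 0 0, βhat 1 0, βhat 1 1, βhat 0 1]
      = ![(1 / (n : ℝ)) * ∑ i, y i * X i 0,
          (1 / (n : ℝ)) * ∑ i, y i * X i 0,
          (1 / (n : ℝ)) * ∑ i, y i * X i 1,
          (1 / (n : ℝ)) * ∑ i, y i * X i 1] := by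
  have hsm : ∀ x z : ℝ, Real.sign x = Real.sign z → |z| * Real.sign x = z := by
    intro x z h
    rw [h]
    rcases lt_trichotomy z 0 with h' | h' | h'
    · rw [Real.sign_of_neg h', abs_of_neg h']; ring
    · subst h'; simp
    · rw [Real.sign_of_pos h', abs_of_pos h']; ring
  -- coordinate (0,0)
  have E00 : βhat 0 0 + (lam_d * |βhat 1 0|) * Real.sign (βhat 0 0)
      = (1 / (n:ℝ)) * ∑ i, (y i - X i 1 * βhat 0 1) * X i 0 := by
    apply coord_key hn (fun i => X i 0) (fun i => y i - X i 1 * βhat 0 1)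
      (by simpa using hcol 0) _ _ (hact 0 0)
    intro ε hε
    have h1 := hmin ![![βhat 0 0 + ε, βhat 0 1], ![βhat 1 0, βhat 1 1]]
    rw [obj_eval, obj_eval] at h1
    simp only [Matrix.cons_val_zero, Matrix.cons_val_one, Matrix.head_cons] at h1
    have hs0 : ∀ t : ℝ, ∑ i, (y i - X i 0 * t - X i 1 * βhat 0 1) ^ 2
        = ∑ i, ((y i - X i 1 * βhat 0 1) - X i 0 * t) ^ 2 :=
      fun t => Finset.sum_congr rfl fun i _ => by ring
    rw [hs0 (βhat 0 0), hs0 (βhat 0 0 + ε)] at h1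
    linarith [h1]
  -- coordinate (1,0)
  have E10 : βhat 1 0 + (lam_d * |βhat 0 0|) * Real.sign (βhat 1 0)
      = (1 / (n:ℝ)) * ∑ i, (y i - X i 1 * βhat 1 1) * X i 0 := by
    apply coord_key hn (fun i => X i 0) (fun i => y i - X i 1 * βhat 1 1)
      (by simpa using hcol 0) _ _ (hact 1 0)
    intro ε hε
    have h1 := hmin ![![βhat 0 0, βhat 0 1], ![βhat 1 0 + ε, βhat 1 1]]
    rw [obj_eval, obj_eval] at h1
    simp only [Matrix.cons_val_zero, Matrix.cons_val_one, Matrix.head_cons] at h1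
    have hs0 : ∀ t : ℝ, ∑ i, (y i - X i 0 * t - X i 1 * βhat 1 1) ^ 2
        = ∑ i, ((y i - X i 1 * βhat 1 1) - X i 0 * t) ^ 2 :=
      fun t => Finset.sum_congr rfl fun i _ => by ring
    rw [hs0 (βhat 1 0), hs0 (βhat 1 0 + ε)] at h1
    linarith [h1]
  -- coordinate (0,1)
  have E01 : βhat 0 1 + (lam_d * |βhat 1 1|) * Real.sign (βhat 0 1)
      = (1 / (n:ℝ)) * ∑ i, (y i - X i 0 * βhat 0 0) * X i 1 := by
    apply coord_key hn (fun i => X i 1) (fun i => y i - X i 0 * βhat 0 0)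
      (by simpa using hcol 1) _ _ (hact 0 1)
    intro ε hε
    have h1 := hmin ![![βhat 0 0, βhat 0 1 + ε], ![βhat 1 0, βhat 1 1]]
    rw [obj_eval, obj_eval] at h1
    simp only [Matrix.cons_val_zero, Matrix.cons_val_one, Matrix.head_cons] at h1
    have hs0 : ∀ t : ℝ, ∑ i, (y i - X i 0 * βhat 0 0 - X i 1 * t) ^ 2
        = ∑ i, ((y i - X i 0 * βhat 0 0) - X i 1 * t) ^ 2 :=
      fun t => Finset.sum_congr rfl fun i _ => by ring
    rw [hs0 (βhat 0 1), hs0 (βhat 0 1 + ε)] at h1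
    linarith [h1]
  -- coordinate (1,1)
  have E11 : βhat 1 1 + (lam_d * |βhat 0 1|) * Real.sign (βhat 1 1)
      = (1 / (n:ℝ)) * ∑ i, (y i - X i 0 * βhat 1 0) * X i 1 := by
    apply coord_key hn (fun i => X i 1) (fun i => y i - X i 0 * βhat 1 0)
      (by simpa using hcol 1) _ _ (hact 1 1)
    intro ε hε
    have h1 := hmin ![![βhat 0 0, βhat 0 1], ![βhat 1 0, βhat 1 1 + ε]]
    rw [obj_eval, obj_eval] at h1
    simp only [Matrix.cons_val_zero, Matrix.cons_val_one, Matrix.head_cons] at h1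
    have hs0 : ∀ t : ℝ, ∑ i, (y i - X i 0 * βhat 1 0 - X i 1 * t) ^ 2
        = ∑ i, ((y i - X i 0 * βhat 1 0) - X i 1 * t) ^ 2 :=
      fun t => Finset.sum_congr rfl fun i _ => by ring
    rw [hs0 (βhat 1 1), hs0 (βhat 1 1 + ε)] at h1
    linarith [h1]
  -- simplify sign terms
  have s00 : (lam_d * |βhat 1 0|) * Real.sign (βhat 0 0) = lam_d * βhat 1 0 := by
    rw [mul_assoc, hsm _ _ hsign₁]
  have s10 : (lam_d * |βhat 0 0|) * Real.sign (βhat 1 0) = lam_d * βhat 0 0 := by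
    rw [mul_assoc, hsm _ _ hsign₁.symm]
  have s01 : (lam_d * |βhat 1 1|) * Real.sign (βhat 0 1) = lam_d * βhat 1 1 := by
    rw [mul_assoc, hsm _ _ hsign₂]
  have s11 : (lam_d * |βhat 0 1|) * Real.sign (βhat 1 1) = lam_d * βhat 0 1 := by
    rw [mul_assoc, hsm _ _ hsign₂.symm]
  rw [s00] at E00; rw [s10] at E10; rw [s01] at E01; rw [s11] at E11
  -- expand the sums on the RHS
  have hsum0 : ∀ a : ℝ, ∑ i, (y i - X i 1 * a) * X i 0
      = ∑ i, y i * X i 0 - a * ∑ i, X i 0 * X i 1 := by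
    intro a
    rw [Finset.mul_sum, ← Finset.sum_sub_distrib]
    exact Finset.sum_congr rfl fun i _ => by ring
  have hsum1 : ∀ a : ℝ, ∑ i, (y i - X i 0 * a) * X i 1
      = ∑ i, y i * X i 1 - a * ∑ i, X i 0 * X i 1 := by
    intro a
    rw [Finset.mul_sum, ← Finset.sum_sub_distrib]
    exact Finset.sum_congr rfl fun i _ => by ring
  rw [hsum0] at E00 E10; rw [hsum1] at E01 E11
  funext k
  fin_cases k <;>
    simp [Matrix.mulVec, dotProduct, Fin.sum_univ_four] <;>
    [(linear_combination E00); (linear_combination E10); (linear_combination E11);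
      (linear_combination E01)]
end

section
/- Let y ∈ ℝⁿ, X ∈ ℝ^{n×p} with (1/n)Σᵢ x_{i,j}² = 1 for every column j, α ∈ [0,1], λ_s, λ_d ≥ 0, and fix a group index g ∈ {1,…,G} and a coordinate j ∈ {1,…,p}. Hold all coordinates of β¹,…,β^G fixed except β^g_j. Then the unique minimizer of the SplitReg objective as a function of β^g_j is β^{new,g}_j = soft( (1/n)Σ_{i=1}^n x_{i,j}(y_i − y_i^{(−j),g}) , α λ_s + λ_d Σ_{h≠g} |β^h_j| ) / (1 + (1−α)λ_s), where y_i^{(−j),g} = Σ_{k≠j} x_{i,k} β^g_k is the in-sample prediction of y_i using model g leaving out variable j. -/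
open Finset

lemma sum_update_eq {N : ℕ} {M : Type*} (f : Fin N → M) (j : Fin N) (t : M)
    (G : Fin N → M → ℝ) :
    ∑ k, G k (Function.update f j t k)
      = G j t + ∑ k ∈ Finset.univ.erase j, G k (f k) := by
  rw [← Finset.sum_erase_add Finset.univ _ (Finset.mem_univ j), Function.update_self, add_comm]
  congr 1
  exact Finset.sum_congr rfl fun k hk => by
    rw [Function.update_of_ne (Finset.ne_of_mem_erase hk)]

lemma strict_min (A B γ : ℝ) (hA : 0 < A) (hγ : 0 ≤ γ) (t : ℝ) (ht : t ≠ soft B γ / A) :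
    A/2*(soft B γ/A)^2 - B*(soft B γ/A) + γ*|soft B γ/A|
      < A/2*t^2 - B*t + γ*|t| := by
  rcases le_or_gt (|B|) γ with hB | hB
  · have hz : soft B γ = 0 := by
      simp [soft, max_eq_left (by linarith : |B| - γ ≤ 0)]
    rw [hz] at ht ⊢
    rw [zero_div] at ht ⊢
    have h1 : 0 < t^2 := by positivity
    have h2 := le_abs_self (B*t)
    have h3 := abs_mul B t
    have h4 : 0 ≤ (γ - |B|) * |t| := mul_nonneg (by linarith) (abs_nonneg t)
    simp only [abs_zero, mul_zero]
    nlinarith [mul_pos hA h1]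
  · rcases abs_cases B with ⟨hb, hb0⟩ | ⟨hb, hb0⟩
    · have hBpos : 0 < B := by linarith
      have hz : soft B γ = B - γ := by
        rw [soft, Real.sign_of_pos hBpos, hb, max_eq_right (by linarith), one_mul]
      set m := soft B γ / A with hm
      have hmpos : 0 < m := by rw [hm, hz]; exact div_pos (by linarith) hA
      have hmeq : A * m = B - γ := by rw [hm, hz]; field_simp
      have habsm : |m| = m := abs_of_pos hmpos
      have h2 : 0 < (t - m)^2 := by
        have : t - m ≠ 0 := sub_ne_zero.mpr ht
        positivity
      rw [habsm]
      rcases abs_cases t with ⟨ht1, _⟩ | ⟨ht1, ht2⟩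
      · rw [ht1]; nlinarith [mul_pos hA h2]
      · rw [ht1]; nlinarith [mul_pos hA h2, mul_nonneg hγ (by linarith : 0 ≤ -t)]
    · have hBneg : B < 0 := by linarith [abs_nonneg B]
      have hz : soft B γ = B + γ := by
        rw [soft, Real.sign_of_neg hBneg, hb, max_eq_right (by linarith)]
        ring
      set m := soft B γ / A with hm
      have hmneg : m < 0 := by
        rw [hm, hz]
        apply div_neg_of_neg_of_pos _ hA
        linarith
      have hmeq : A * m = B + γ := by rw [hm, hz]; field_simp
      have habsm : |m| = -m := abs_of_neg hmneg
      have h2 : 0 < (t - m)^2 := by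
        have : t - m ≠ 0 := sub_ne_zero.mpr ht
        positivity
      rw [habsm]
      rcases abs_cases t with ⟨ht1, ht2⟩ | ⟨ht1, _⟩
      · rw [ht1]; nlinarith [mul_pos hA h2, mul_nonneg hγ ht2]
      · rw [ht1]; nlinarith [mul_pos hA h2]

/-- **Proposition 3: the coordinate descent update.**
With all other coordinates held fixed, the unique minimizer of the SplitReg objective
as a function of `β^g_j` is
`soft((1/n)∑ᵢ x_{i,j}(y_i - y_i^{(-j),g}), αλ_s + λ_d ∑_{h≠g} |β^h_j|) / (1 + (1-α)λ_s)`,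
where `y_i^{(-j),g} = ∑_{k≠j} x_{i,k} β^g_k`. -/
theorem splitreg_coordinate_update
    {n p G : ℕ} (hn : 0 < n) (y : Fin n → ℝ) (X : Matrix (Fin n) (Fin p) ℝ)
    (α lam_s lam_d : ℝ) (hα : α ∈ Set.Icc (0 : ℝ) 1) (hs : 0 ≤ lam_s) (hd : 0 ≤ lam_d)
    (hcol : ∀ k : Fin p, (1 / (n : ℝ)) * ∑ i, (X i k) ^ 2 = 1)
    (β : Fin G → Fin p → ℝ) (g : Fin G) (j : Fin p) :
    (∀ t : ℝ,
        splitRegObj y X α lam_s lam_d (Function.update β g (Function.update (β g) j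
          (soft ((1 / (n : ℝ)) *
              ∑ i, X i j * (y i - ∑ k ∈ Finset.univ.erase j, X i k * β g k))
            (α * lam_s + lam_d * ∑ h ∈ Finset.univ.erase g, |β h j|)
            / (1 + (1 - α) * lam_s))))
        ≤ splitRegObj y X α lam_s lam_d (Function.update β g (Function.update (β g) j t))) ∧
    ∀ t : ℝ,
      (∀ s : ℝ,
        splitRegObj y X α lam_s lam_d (Function.update β g (Function.update (β g) j t))
          ≤ splitRegObj y X α lam_s lam_d (Function.update β g (Function.update (β g) j s))) →
      t = soft ((1 / (n : ℝ)) *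
              ∑ i, X i j * (y i - ∑ k ∈ Finset.univ.erase j, X i k * β g k))
            (α * lam_s + lam_d * ∑ h ∈ Finset.univ.erase g, |β h j|)
            / (1 + (1 - α) * lam_s) := by
  obtain ⟨hα0, hα1⟩ := hα
  have hn' : (n:ℝ) ≠ 0 := Nat.cast_ne_zero.mpr hn.ne'
  set Bv : ℝ := (1 / (n : ℝ)) *
      ∑ i, X i j * (y i - ∑ k ∈ Finset.univ.erase j, X i k * β g k) with hBv
  set γv : ℝ := α * lam_s + lam_d * ∑ h ∈ Finset.univ.erase g, |β h j| with hγv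
  set A : ℝ := 1 + (1 - α) * lam_s with hA
  have hApos : 0 < A := by
    have : 0 ≤ (1 - α) * lam_s := mul_nonneg (by linarith) hs
    rw [hA]; linarith
  have hγpos : 0 ≤ γv := by
    rw [hγv]
    exact add_nonneg (mul_nonneg hα0 hs)
      (mul_nonneg hd (Finset.sum_nonneg fun _ _ => abs_nonneg _))
  have hXsq : ∑ i, (X i j)^2 = (n:ℝ) := by
    have h := hcol j
    field_simp at h
    linarith
  have loss_id : ∀ t : ℝ,
      ∑ i, (y i - (X i j * t + ∑ k ∈ univ.erase j, X i k * β g k))^2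
      = ∑ i, (y i - ∑ k ∈ univ.erase j, X i k * β g k)^2
          - 2*((n:ℝ)*Bv)*t + (n:ℝ)*t^2 := by
    intro t
    have hexp : ∀ i : Fin n,
        (y i - (X i j * t + ∑ k ∈ univ.erase j, X i k * β g k))^2
        = (y i - ∑ k ∈ univ.erase j, X i k * β g k)^2
          - 2*(X i j * (y i - ∑ k ∈ univ.erase j, X i k * β g k))*t
          + (X i j)^2*t^2 := fun i => by ring
    rw [Finset.sum_congr rfl fun i _ => hexp i, Finset.sum_add_distrib,
      Finset.sum_sub_distrib, ← Finset.sum_mul, ← Finset.sum_mul,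
      ← Finset.mul_sum, hXsq]
    have hnBv : (n:ℝ) * Bv = ∑ i, X i j * (y i - ∑ k ∈ univ.erase j, X i k * β g k) := by
      rw [hBv]; field_simp
    rw [hnBv]
  have E : ∀ t : ℝ, splitRegObj y X α lam_s lam_d (Function.update β g (Function.update (β g) j t))
      = (1 / (2 * (n : ℝ))) * ∑ i, (y i - (X i j * t + ∑ k ∈ univ.erase j, X i k * β g k)) ^ 2
        + lam_s * ((1 - α) / 2 * (t^2 + ∑ k ∈ univ.erase j, (β g k)^2)
            + α * (|t| + ∑ k ∈ univ.erase j, |β g k|))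
        + lam_d / 2 * (∑ h ∈ univ.erase g, (|t| * |β h j| + ∑ k ∈ univ.erase j, |β g k| * |β h k|))
        + ∑ g' ∈ univ.erase g,
            ((1 / (2 * (n : ℝ))) * ∑ i, (y i - ∑ k, X i k * β g' k) ^ 2
              + lam_s * ((1 - α) / 2 * ∑ k, (β g' k) ^ 2 + α * ∑ k, |β g' k|)
              + lam_d / 2 * ((|β g' j| * |t| + ∑ k ∈ univ.erase j, |β g' k| * |β g k|)
                  + ∑ h ∈ (univ.erase g').erase g, ∑ k, |β g' k| * |β h k|)) := by
    intro t
    have h0 : splitRegObj y X α lam_s lam_d (Function.update β g (Function.update (β g) j t))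
        = ∑ g' : Fin G, (fun g' (v : Fin p → ℝ) =>
            (1 / (2 * (n : ℝ))) * ∑ i, (y i - ∑ k, X i k * v k) ^ 2
            + lam_s * ((1 - α) / 2 * ∑ k, (v k) ^ 2 + α * ∑ k, |v k|)
            + lam_d / 2 * ∑ h ∈ Finset.univ.erase g', ∑ k, |v k| *
                |Function.update β g (Function.update (β g) j t) h k|) g'
              (Function.update β g (Function.update (β g) j t) g') := rfl
    have h1 := sum_update_eq (M := Fin p → ℝ) β g (Function.update (β g) j t)
      (fun g' (v : Fin p → ℝ) =>
            (1 / (2 * (n : ℝ))) * ∑ i, (y i - ∑ k, X i k * v k) ^ 2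
            + lam_s * ((1 - α) / 2 * ∑ k, (v k) ^ 2 + α * ∑ k, |v k|)
            + lam_d / 2 * ∑ h ∈ Finset.univ.erase g', ∑ k, |v k| *
                |Function.update β g (Function.update (β g) j t) h k|)
    rw [h0, h1]
    congr 1
    · have e1 : ∀ i : Fin n, (∑ k, X i k * Function.update (β g) j t k)
          = X i j * t + ∑ k ∈ univ.erase j, X i k * β g k :=
        fun i => sum_update_eq (β g) j t (fun k v => X i k * v)
      have e2 : (∑ k, (Function.update (β g) j t k)^2)
          = t^2 + ∑ k ∈ univ.erase j, (β g k)^2 :=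
        sum_update_eq (β g) j t (fun _ v => v^2)
      have e3 : (∑ k, |Function.update (β g) j t k|)
          = |t| + ∑ k ∈ univ.erase j, |β g k| :=
        sum_update_eq (β g) j t (fun _ v => |v|)
      have e6 : (∑ h ∈ univ.erase g, ∑ k, |Function.update (β g) j t k| *
            |Function.update β g (Function.update (β g) j t) h k|)
          = ∑ h ∈ univ.erase g, (|t| * |β h j| + ∑ k ∈ univ.erase j, |β g k| * |β h k|) := by
        refine Finset.sum_congr rfl fun h hh => ?_
        rw [Function.update_of_ne (Finset.ne_of_mem_erase hh)]
        exact sum_update_eq (β g) j t (fun k v => |v| * |β h k|)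
      simp only [Function.update_self, e1, e2, e3]
      rw [e6]
    · refine Finset.sum_congr rfl fun g' hg' => ?_
      have hgmem : g ∈ univ.erase g' :=
        Finset.mem_erase.mpr ⟨(Finset.ne_of_mem_erase hg').symm, Finset.mem_univ g⟩
      congr 1
      rw [← Finset.add_sum_erase _ _ hgmem]
      congr 1
      congr 1
      · rw [Function.update_self]
        exact sum_update_eq (β g) j t (fun k v => |β g' k| * |v|)
      · refine Finset.sum_congr rfl fun h hh => ?_
        refine Finset.sum_congr rfl fun k _ => ?_
        rw [Function.update_of_ne (Finset.ne_of_mem_erase hh)]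
  have expand : ∀ t : ℝ,
      splitRegObj y X α lam_s lam_d (Function.update β g (Function.update (β g) j t))
      = A/2*t^2 - Bv*t + γv*|t|
        + splitRegObj y X α lam_s lam_d (Function.update β g (Function.update (β g) j 0)) := by
    intro t
    rw [E t, E 0]
    simp only [mul_zero, zero_add, abs_zero, zero_mul, add_zero,
      ne_eq, OfNat.ofNat_ne_zero, not_false_eq_true, zero_pow]
    rw [loss_id t]
    rw [Finset.sum_add_distrib, ← Finset.mul_sum]
    have hsplit : ∀ g' ∈ univ.erase g,
        ((1 / (2 * (n : ℝ))) * ∑ i, (y i - ∑ k, X i k * β g' k) ^ 2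
          + lam_s * ((1 - α) / 2 * ∑ k, (β g' k) ^ 2 + α * ∑ k, |β g' k|)
          + lam_d / 2 * ((|β g' j| * |t| + ∑ k ∈ univ.erase j, |β g' k| * |β g k|)
              + ∑ h ∈ (univ.erase g').erase g, ∑ k, |β g' k| * |β h k|))
        = ((1 / (2 * (n : ℝ))) * ∑ i, (y i - ∑ k, X i k * β g' k) ^ 2
          + lam_s * ((1 - α) / 2 * ∑ k, (β g' k) ^ 2 + α * ∑ k, |β g' k|)
          + lam_d / 2 * ((∑ k ∈ univ.erase j, |β g' k| * |β g k|)
              + ∑ h ∈ (univ.erase g').erase g, ∑ k, |β g' k| * |β h k|))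
          + lam_d / 2 * (|β g' j| * |t|) := fun _ _ => by ring
    rw [Finset.sum_congr rfl hsplit, Finset.sum_add_distrib, ← Finset.mul_sum,
      ← Finset.sum_mul]
    rw [hγv, hA]
    have h2n : (2*(n:ℝ)) ≠ 0 := by positivity
    field_simp
    ring
  constructor
  · intro t
    rw [expand t, expand (soft Bv γv / A)]
    rcases eq_or_ne t (soft Bv γv / A) with h | h
    · rw [h]
    · have := strict_min A Bv γv hApos hγpos t h
      linarith
  · intro t h
    by_contra hne
    have h1 := h (soft Bv γv / A)
    rw [expand t, expand (soft Bv γv / A)] at h1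
    have := strict_min A Bv γv hApos hγpos t hne
    linarith
end

section
/- Assume the linear model y_i = ⟨x_i, β₀⟩ + ε_i, i = 1,…,n, with fixed design X ∈ ℝ^{n×p} whose columns satisfy (1/n)Σᵢ x_{i,j}² = 1, and with ε₁,…,ε_n i.i.d. Gaussian with mean 0 and variance σ². Let α ∈ (0,1], t > 0, λ_d ≥ 0, and assume λ_s ≥ (1/α)·σ·√((t² + 2 log p)/n). Let (β̂¹,…,β̂^G) be any global minimizer of the SplitReg objective. Then with probability at least 1 − 2·exp(−t²/2), (1/(2n))·‖ X·((1/G)Σ_{g=1}^G β̂^g) − X β₀ ‖₂² ≤ 2α λ_s ‖β₀‖₁ + λ_s·((1−α)/2)·‖β₀‖₂² + (λ_d (G−1)/2)·‖β₀‖₂². -/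
/-!
Compare a minimizer `b` with the stack `(β₀, …, β₀)`, whose objective value is `G` times the
elastic net value at `β₀` plus the diversity cost `λ_d (G - 1)/2 ‖β₀‖₂²`. Discarding the ridge and
diversity terms at `b` and using convexity of the least-squares loss and of `‖·‖₁`, the group
average `b̄` satisfies the basic inequality
`‖X(b̄ - β₀)‖₂²/(2n) ≤ ⟨Xᵀε, b̄ - β₀⟩/n + αλ_s (‖β₀‖₁ - ‖b̄‖₁) + (λ_s (1-α) + λ_d (G-1))/2 ‖β₀‖₂²`.
On the event `max_j |(Xᵀε)_j| ≤ nαλ_s` the cross term is at most `αλ_s (‖b̄‖₁ + ‖β₀‖₁)`, which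
gives the bound. Each `(Xᵀε)_j` is sub-Gaussian with variance proxy `nσ²`, so by the Chernoff
bound and a union bound over the `2p` one-sided events this event fails with probability at most
`2p exp(-nα²λ_s²/(2σ²)) ≤ 2 exp(-t²/2)`.
-/

open Finset

section Deterministic

variable {n p G : ℕ}

lemma splitRegObj_const (y : Fin n → ℝ) (X : Matrix (Fin n) (Fin p) ℝ) (α lam_s lam_d : ℝ)
    (β : Fin p → ℝ) :
    splitRegObj y X α lam_s lam_d (fun _ : Fin G => β) =
      G * ((1 / (2 * (n : ℝ))) * ∑ i, (y i - ∑ j, X i j * β j) ^ 2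
        + lam_s * ((1 - α) / 2 * ∑ j, β j ^ 2 + α * ∑ j, |β j|)
        + lam_d * ((G : ℝ) - 1) / 2 * ∑ j, β j ^ 2) := by
  have hdiversity : ∀ g : Fin G,
      ∑ _h ∈ univ.erase g, ∑ j, |β j| * |β j| = ((G : ℝ) - 1) * ∑ j, β j ^ 2 := by
    intro g
    rw [sum_const, card_erase_of_mem (mem_univ g), card_univ, Fintype.card_fin, nsmul_eq_mul,
      Nat.cast_pred g.pos]
    simp only [abs_mul_abs_self, sq]
  simp only [splitRegObj, hdiversity, sum_const, card_univ, Fintype.card_fin, nsmul_eq_mul]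
  ring

lemma sum_loss_add_l1_le_splitRegObj (y : Fin n → ℝ) (X : Matrix (Fin n) (Fin p) ℝ)
    {α lam_s lam_d : ℝ} (hα : α ≤ 1) (hs : 0 ≤ lam_s) (hd : 0 ≤ lam_d) (b : Fin G → Fin p → ℝ) :
    ∑ g, ((1 / (2 * (n : ℝ))) * ∑ i, (y i - ∑ j, X i j * b g j) ^ 2 + α * lam_s * ∑ j, |b g j|)
      ≤ splitRegObj y X α lam_s lam_d b := by
  refine sum_le_sum fun g _ => ?_
  have hridge : 0 ≤ lam_s * ((1 - α) / 2 * ∑ j, b g j ^ 2) := by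
    have : 0 ≤ 1 - α := by linarith
    positivity
  have hdiversity : 0 ≤ lam_d / 2 * ∑ h ∈ univ.erase g, ∑ j, |b g j| * |b h j| := by positivity
  linarith

lemma sum_sq_residual_mean_le {ι κ : Type*} [Fintype ι] [Fintype κ] (hG : 0 < G) (y : ι → ℝ)
    (X : Matrix ι κ ℝ) (b : Fin G → κ → ℝ) :
    ∑ i, (y i - ∑ j, X i j * ((1 / (G : ℝ)) * ∑ g, b g j)) ^ 2
      ≤ (1 / (G : ℝ)) * ∑ g, ∑ i, (y i - ∑ j, X i j * b g j) ^ 2 := by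
  have hmean : ∀ i, y i - ∑ j, X i j * ((1 / (G : ℝ)) * ∑ g, b g j)
      = (∑ g, (y i - ∑ j, X i j * b g j)) / #(univ : Finset (Fin G)) := by
    intro i
    have hG' : (G : ℝ) ≠ 0 := by positivity
    simp only [card_univ, Fintype.card_fin, sum_sub_distrib, sum_const, nsmul_eq_mul, sub_div,
      mul_sum, sum_div]
    rw [sum_comm]
    field_simp
  calc ∑ i, (y i - ∑ j, X i j * ((1 / (G : ℝ)) * ∑ g, b g j)) ^ 2
      ≤ ∑ i, (∑ g, (y i - ∑ j, X i j * b g j) ^ 2) / #(univ : Finset (Fin G)) := by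
        simp only [hmean]
        exact sum_le_sum fun i _ => sum_div_card_sq_le_sum_sq_div_card
    _ = (1 / (G : ℝ)) * ∑ g, ∑ i, (y i - ∑ j, X i j * b g j) ^ 2 := by
        rw [← sum_div, sum_comm, card_univ, Fintype.card_fin]
        ring

lemma sum_abs_mean_le {κ : Type*} [Fintype κ] (b : Fin G → κ → ℝ) :
    ∑ j, |(1 / (G : ℝ)) * ∑ g, b g j| ≤ (1 / (G : ℝ)) * ∑ g, ∑ j, |b g j| := by
  rw [sum_comm, mul_sum]
  refine sum_le_sum fun j _ => ?_
  rw [abs_mul, abs_of_nonneg (by positivity)]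
  gcongr
  exact abs_sum_le_sum_abs _ _

lemma sum_sq_residual_ge {ι κ : Type*} [Fintype ι] [Fintype κ] (X : Matrix ι κ ℝ)
    (β0 β : κ → ℝ) (e : ι → ℝ) {c : ℝ} (hc : ∀ j, |∑ i, X i j * e i| ≤ c) :
    ∑ i, (∑ j, X i j * β j - ∑ j, X i j * β0 j) ^ 2 - 2 * c * ∑ j, |β j - β0 j| + ∑ i, e i ^ 2
      ≤ ∑ i, (∑ j, X i j * β0 j + e i - ∑ j, X i j * β j) ^ 2 := by
  set u : ι → ℝ := fun i => ∑ j, X i j * β j - ∑ j, X i j * β0 j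
  have hcross : ∑ i, e i * u i = ∑ j, (β j - β0 j) * ∑ i, X i j * e i := by
    simp only [u, ← sum_sub_distrib, ← mul_sub, mul_sum]
    rw [sum_comm]
    exact sum_congr rfl fun j _ => sum_congr rfl fun i _ => by ring
  have hcross_le : ∑ j, (β j - β0 j) * ∑ i, X i j * e i ≤ c * ∑ j, |β j - β0 j| := by
    rw [mul_sum]
    refine sum_le_sum fun j _ => ?_
    calc (β j - β0 j) * ∑ i, X i j * e i ≤ |β j - β0 j| * |∑ i, X i j * e i| := by
          rw [← abs_mul]; exact le_abs_self _
      _ ≤ c * |β j - β0 j| := by rw [mul_comm]; gcongr; exact hc j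
  have hexpand : ∑ i, (∑ j, X i j * β0 j + e i - ∑ j, X i j * β j) ^ 2
      = ∑ i, u i ^ 2 - 2 * ∑ i, e i * u i + ∑ i, e i ^ 2 := by
    rw [mul_sum, ← sum_sub_distrib, ← sum_add_distrib]
    exact sum_congr rfl fun i _ => by ring
  rw [hexpand, hcross]
  linarith

theorem splitReg_prediction_error_le (hn : 0 < n) (hG : 0 < G) (X : Matrix (Fin n) (Fin p) ℝ)
    (β0 : Fin p → ℝ) (e : Fin n → ℝ) {α lam_s lam_d : ℝ} (hα₀ : 0 ≤ α) (hα₁ : α ≤ 1)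
    (hs : 0 ≤ lam_s) (hd : 0 ≤ lam_d) (b : Fin G → Fin p → ℝ)
    (hmin : splitRegObj (fun i => ∑ j, X i j * β0 j + e i) X α lam_s lam_d b
      ≤ splitRegObj (fun i => ∑ j, X i j * β0 j + e i) X α lam_s lam_d (fun _ : Fin G => β0))
    (hnoise : ∀ j, |∑ i, X i j * e i| ≤ n * (α * lam_s)) :
    (1 / (2 * (n : ℝ))) *
        ∑ i, ((∑ j, X i j * ((1 / (G : ℝ)) * ∑ g, b g j)) - ∑ j, X i j * β0 j) ^ 2
      ≤ 2 * α * lam_s * (∑ j, |β0 j|) + lam_s * ((1 - α) / 2) * (∑ j, (β0 j) ^ 2)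
        + lam_d * ((G : ℝ) - 1) / 2 * (∑ j, (β0 j) ^ 2) := by
  set y : Fin n → ℝ := fun i => ∑ j, X i j * β0 j + e i
  set bbar : Fin p → ℝ := fun j => (1 / (G : ℝ)) * ∑ g, b g j
  have hn' : (0 : ℝ) < n := by exact_mod_cast hn
  have hG' : (0 : ℝ) < G := by exact_mod_cast hG
  have hαs : 0 ≤ α * lam_s := mul_nonneg hα₀ hs
  have hy : ∀ i, y i - ∑ j, X i j * β0 j = e i := fun i => add_sub_cancel_left _ _
  have hconvex : (1 / (2 * (n : ℝ))) * ∑ i, (y i - ∑ j, X i j * bbar j) ^ 2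
        + α * lam_s * ∑ j, |bbar j|
      ≤ (1 / G) * ∑ g, ((1 / (2 * (n : ℝ))) * ∑ i, (y i - ∑ j, X i j * b g j) ^ 2
        + α * lam_s * ∑ j, |b g j|) := by
    rw [sum_add_distrib, ← mul_sum, ← mul_sum, mul_add, mul_left_comm,
      mul_left_comm (1 / (G : ℝ))]
    gcongr
    · exact sum_sq_residual_mean_le hG y X b
    · exact sum_abs_mean_le b
  have hobj := (sum_loss_add_l1_le_splitRegObj y X hα₁ hs hd b).trans
    (hmin.trans_eq (splitRegObj_const y X α lam_s lam_d β0))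
  have hresidual := sum_sq_residual_ge X β0 bbar e hnoise
  have htri : ∑ j, |bbar j - β0 j| ≤ ∑ j, |bbar j| + ∑ j, |β0 j| := by
    rw [← sum_add_distrib]; exact sum_le_sum fun j _ => abs_sub _ _
  simp only [hy] at hobj
  have haverage := hconvex.trans (by rw [one_div_mul_eq_div, div_le_iff₀' hG']; exact hobj)
  have hscaled := mul_le_mul_of_nonneg_left hresidual (by positivity : (0 : ℝ) ≤ 1 / (2 * n))
  have hcancel : 1 / (2 * (n : ℝ)) * (2 * (n * (α * lam_s)) * ∑ j, |bbar j - β0 j|)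
      = α * lam_s * ∑ j, |bbar j - β0 j| := by
    field_simp
  rw [mul_add, mul_sub, hcancel] at hscaled
  change (1 / (2 * (n : ℝ))) * ∑ i, (∑ j, X i j * bbar j - ∑ j, X i j * β0 j) ^ 2 ≤ _
  linarith [mul_le_mul_of_nonneg_left htri hαs]

end Deterministic

open MeasureTheory ProbabilityTheory

namespace ProbabilityTheory

open Real
open scoped NNReal

variable {Ω : Type*} [MeasurableSpace Ω] {μ : Measure Ω}

lemma hasSubgaussianMGF_of_map_eq_gaussianReal {X : Ω → ℝ} {v : ℝ≥0}
    (h : μ.map X = gaussianReal 0 v) : HasSubgaussianMGF X v μ := by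
  rw [← HasSubgaussianMGF.id_map_iff (aemeasurable_of_map_neZero (by rw [h]; infer_instance)), h]
  refine ⟨fun t => integrable_exp_mul_gaussianReal t, fun t => ?_⟩
  simp [mgf_id_gaussianReal]

lemma HasSubgaussianMGF.sum_mul_of_iIndepFun {ι : Type*} [Fintype ι] {ε : ι → Ω → ℝ}
    (hindep : iIndepFun ε μ) {v : ℝ≥0} (h : ∀ i, HasSubgaussianMGF (ε i) v μ) (c : ι → ℝ)
    {w : ℝ≥0} (hw : (w : ℝ) = (∑ i, c i ^ 2) * v) :
    HasSubgaussianMGF (fun ω => ∑ i, c i * ε i ω) w μ := by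
  have hw' : w = ∑ i, ⟨c i ^ 2, sq_nonneg (c i)⟩ * v := by
    ext
    rw [hw, NNReal.coe_sum, Finset.sum_mul]
    rfl
  rw [hw']
  exact HasSubgaussianMGF.sum_of_iIndepFun
    (hindep.comp (fun i x => c i * x) fun i => measurable_const_mul (c i))
    fun i _ => (h i).const_mul (c i)

lemma HasSubgaussianMGF.measureReal_abs_ge_le {X : Ω → ℝ} {c : ℝ≥0}
    (h : HasSubgaussianMGF X c μ) {a : ℝ} (ha : 0 ≤ a) :
    μ.real {ω | a ≤ |X ω|} ≤ 2 * exp (-a ^ 2 / (2 * c)) := by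
  have hsplit : {ω | a ≤ |X ω|} = {ω | a ≤ X ω} ∪ {ω | a ≤ (-X) ω} := by
    ext ω
    simp only [Set.mem_ofPred_eq, Set.mem_union, Pi.neg_apply, le_abs]
  calc μ.real {ω | a ≤ |X ω|} ≤ μ.real {ω | a ≤ X ω} + μ.real {ω | a ≤ (-X) ω} := by
        rw [hsplit]; exact measureReal_union_le _ _
    _ ≤ exp (-a ^ 2 / (2 * c)) + exp (-a ^ 2 / (2 * c)) :=
        add_le_add (h.measure_ge_le ha) (h.neg.measure_ge_le ha)
    _ = 2 * exp (-a ^ 2 / (2 * c)) := by ring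

lemma ofReal_one_sub_le_measure_of_compl_subset [IsProbabilityMeasure μ] {B S : Set Ω} {δ : ℝ}
    (hB : μ.real B ≤ δ) (hS : Bᶜ ⊆ S) : ENNReal.ofReal (1 - δ) ≤ μ S := by
  have h1 : 1 ≤ μ S + μ B := calc
    1 = μ (Bᶜ ∪ B) := by rw [Set.compl_union_self, measure_univ]
    _ ≤ μ Bᶜ + μ B := measure_union_le _ _
    _ ≤ μ S + μ B := by gcongr
  calc ENNReal.ofReal (1 - δ) ≤ ENNReal.ofReal (1 - μ.real B) := by gcongr
    _ = 1 - μ B := by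
        rw [ENNReal.ofReal_sub _ measureReal_nonneg, ENNReal.ofReal_one, ofReal_measureReal]
    _ ≤ μ S := tsub_le_iff_right.mpr h1

lemma measureReal_iUnion_abs_ge_le {ι : Type*} [Fintype ι] {Y : ι → Ω → ℝ} {c : ℝ≥0}
    (h : ∀ j, HasSubgaussianMGF (Y j) c μ) {a : ℝ} (ha : 0 ≤ a) :
    μ.real (⋃ j, {ω | a ≤ |Y j ω|}) ≤ Fintype.card ι * (2 * exp (-a ^ 2 / (2 * c))) := by
  calc μ.real (⋃ j, {ω | a ≤ |Y j ω|}) ≤ ∑ j, μ.real {ω | a ≤ |Y j ω|} :=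
        measureReal_iUnion_fintype_le _
    _ ≤ ∑ _j : ι, 2 * exp (-a ^ 2 / (2 * c)) :=
        Finset.sum_le_sum fun j _ => (h j).measureReal_abs_ge_le ha
    _ = Fintype.card ι * (2 * exp (-a ^ 2 / (2 * c))) := by
        rw [Finset.sum_const, Finset.card_univ, nsmul_eq_mul]

lemma mul_exp_neg_sq_div_le {n p σ t a : ℝ} (hn : 0 < n) (hp : 1 ≤ p) (hσ : 0 < σ)
    (ha : σ * √((t ^ 2 + 2 * log p) / n) ≤ a) :
    p * exp (-(n * a) ^ 2 / (2 * (n * σ ^ 2))) ≤ exp (-t ^ 2 / 2) := by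
  have hq : 0 ≤ (t ^ 2 + 2 * log p) / n := by have := log_nonneg hp; positivity
  have hsq : σ ^ 2 * ((t ^ 2 + 2 * log p) / n) ≤ a ^ 2 := by
    calc σ ^ 2 * ((t ^ 2 + 2 * log p) / n) = (σ * √((t ^ 2 + 2 * log p) / n)) ^ 2 := by
          rw [mul_pow, sq_sqrt hq]
      _ ≤ a ^ 2 := by gcongr
  have hexp : -(n * a) ^ 2 / (2 * (n * σ ^ 2)) ≤ -t ^ 2 / 2 - log p := by
    rw [div_le_iff₀ (by positivity)]
    rw [mul_div_assoc', div_le_iff₀ hn] at hsq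
    nlinarith
  calc p * exp (-(n * a) ^ 2 / (2 * (n * σ ^ 2))) ≤ p * exp (-t ^ 2 / 2 - log p) := by gcongr
    _ = exp (-t ^ 2 / 2) := by
        rw [exp_sub, exp_log (by linarith)]
        field_simp

end ProbabilityTheory

theorem splitreg_consistency_general
    {Ω : Type*} [MeasurableSpace Ω] (μ : Measure Ω) [IsProbabilityMeasure μ]
    {n p G : ℕ} (hn : 0 < n) (hp : 0 < p) (hG : 0 < G)
    (X : Matrix (Fin n) (Fin p) ℝ) (β0 : Fin p → ℝ)
    (hcol : ∀ j : Fin p, (1 / (n : ℝ)) * ∑ i, (X i j) ^ 2 = 1)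
    (σ : ℝ) (hσ : 0 < σ)
    (ε : Fin n → Ω → ℝ)
    (hindep : iIndepFun ε μ)
    (hgauss : ∀ i, Measure.map (ε i) μ = gaussianReal 0 ⟨σ ^ 2, sq_nonneg σ⟩)
    (α lam_s lam_d t : ℝ) (hα₁ : 0 < α) (hα₂ : α ≤ 1) (hd : 0 ≤ lam_d)
    (hls : (1 / α) * σ * Real.sqrt ((t ^ 2 + 2 * Real.log p) / n) ≤ lam_s)
    (βhat : Ω → Fin G → Fin p → ℝ)
    (hmin : ∀ ω, ∀ b : Fin G → Fin p → ℝ,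
      splitRegObj (fun i => ∑ j, X i j * β0 j + ε i ω) X α lam_s lam_d (βhat ω)
        ≤ splitRegObj (fun i => ∑ j, X i j * β0 j + ε i ω) X α lam_s lam_d b) :
    ENNReal.ofReal (1 - 2 * Real.exp (-t ^ 2 / 2)) ≤
      μ {ω | (1 / (2 * (n : ℝ))) *
          ∑ i, ((∑ j, X i j * ((1 / (G : ℝ)) * ∑ g, βhat ω g j)) - ∑ j, X i j * β0 j) ^ 2
        ≤ 2 * α * lam_s * (∑ j, |β0 j|)
          + lam_s * ((1 - α) / 2) * (∑ j, (β0 j) ^ 2)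
          + lam_d * ((G : ℝ) - 1) / 2 * (∑ j, (β0 j) ^ 2)} := by
  have hn' : (0 : ℝ) < n := by exact_mod_cast hn
  have hvar : ∀ j, (n * σ ^ 2 : ℝ) = (∑ i, X i j ^ 2) * σ ^ 2 := fun j => by
    rw [(div_eq_one_iff_eq hn'.ne').mp ((one_div_mul_eq_div _ _).symm.trans (hcol j))]
  have hnoise : ∀ j,
      HasSubgaussianMGF (fun ω => ∑ i, X i j * ε i ω) ⟨n * σ ^ 2, by positivity⟩ μ :=
    fun j => HasSubgaussianMGF.sum_mul_of_iIndepFun hindep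
      (fun i => hasSubgaussianMGF_of_map_eq_gaussianReal (hgauss i)) (fun i => X i j) (hvar j)
  have hs : 0 ≤ lam_s := le_trans (by positivity) hls
  have hthreshold : σ * Real.sqrt ((t ^ 2 + 2 * Real.log p) / n) ≤ α * lam_s := by
    rw [one_div_mul_eq_div, div_mul_eq_mul_div, div_le_iff₀ hα₁] at hls
    linarith
  refine ofReal_one_sub_le_measure_of_compl_subset
    (B := ⋃ j, {ω | n * (α * lam_s) ≤ |∑ i, X i j * ε i ω|}) ?_ fun ω hω => ?_
  · calc _ ≤ p * (2 * Real.exp (-(n * (α * lam_s)) ^ 2 / (2 * (n * σ ^ 2)))) :=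
          (measureReal_iUnion_abs_ge_le hnoise (by positivity)).trans_eq
            (by rw [Fintype.card_fin]; rfl)
      _ ≤ 2 * Real.exp (-t ^ 2 / 2) := by
          rw [mul_left_comm]
          gcongr
          exact mul_exp_neg_sq_div_le hn' (by exact_mod_cast hp) hσ hthreshold
  · simp only [Set.mem_compl_iff, Set.mem_iUnion, Set.mem_ofPred_eq, not_exists, not_le] at hω
    exact splitReg_prediction_error_le hn hG X β0 (fun i => ε i ω) hα₁.le hα₂ hs hd (βhat ω)
      (hmin ω _) fun j => (hω j).le

/-- **Theorem 1: consistency of SplitReg.**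
Under the linear model `y = Xβ₀ + ε` with i.i.d. `N(0, σ²)` errors, normalized columns,
`α ∈ (0,1]` and `λ_s ≥ (1/α)σ√((t² + 2 log p)/n)`, any global minimizer of the SplitReg
objective satisfies, with probability at least `1 - 2 exp(-t²/2)`,
`(1/(2n))‖X((1/G)∑_g β̂^g) - Xβ₀‖² ≤ 2αλ_s‖β₀‖₁ + λ_s((1-α)/2)‖β₀‖₂² + (λ_d(G-1)/2)‖β₀‖₂²`. -/
theorem splitreg_consistency
    {Ω : Type*} [MeasurableSpace Ω] (μ : Measure Ω) [IsProbabilityMeasure μ]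
    {n p G : ℕ} (hn : 0 < n) (hp : 0 < p) (hG : 0 < G)
    (X : Matrix (Fin n) (Fin p) ℝ) (β0 : Fin p → ℝ)
    (hcol : ∀ j : Fin p, (1 / (n : ℝ)) * ∑ i, (X i j) ^ 2 = 1)
    (σ : ℝ) (hσ : 0 < σ)
    (ε : Fin n → Ω → ℝ)
    (hindep : iIndepFun ε μ)
    (hgauss : ∀ i, Measure.map (ε i) μ = gaussianReal 0 ⟨σ ^ 2, sq_nonneg σ⟩)
    (α lam_s lam_d t : ℝ) (hα₁ : 0 < α) (hα₂ : α ≤ 1) (ht : 0 < t) (hd : 0 ≤ lam_d)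
    (hls : (1 / α) * σ * Real.sqrt ((t ^ 2 + 2 * Real.log p) / n) ≤ lam_s)
    (βhat : Ω → Fin G → Fin p → ℝ)
    (hmin : ∀ ω, ∀ b : Fin G → Fin p → ℝ,
      splitRegObj (fun i => ∑ j, X i j * β0 j + ε i ω) X α lam_s lam_d (βhat ω)
        ≤ splitRegObj (fun i => ∑ j, X i j * β0 j + ε i ω) X α lam_s lam_d b) :
    ENNReal.ofReal (1 - 2 * Real.exp (-t ^ 2 / 2)) ≤
      μ {ω | (1 / (2 * (n : ℝ))) *
          ∑ i, ((∑ j, X i j * ((1 / (G : ℝ)) * ∑ g, βhat ω g j)) - ∑ j, X i j * β0 j) ^ 2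
        ≤ 2 * α * lam_s * (∑ j, |β0 j|)
          + lam_s * ((1 - α) / 2) * (∑ j, (β0 j) ^ 2)
          + lam_d * ((G : ℝ) - 1) / 2 * (∑ j, (β0 j) ^ 2)} :=
  splitreg_consistency_general μ hn hp hG X β0 hcol σ hσ ε hindep hgauss α lam_s lam_d t hα₁ hα₂ hd
    hls βhat hmin
end
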